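/- arXiv:1609.03401 — 10 statements merged into one kernel-verified Lean document; each statement's English description precedes it below -/
import Mathlib

section
/- If α, β, γ, δ are nonzero elements of a finite field F_q with α + β = γ + δ, and a₁, a₂, a₃, a₄ are nonzero elements of F_q satisfying αa₁ + βa₂ = γa₃ + δa₄ and αa₁² + βa₂² = γa₃² + δa₄², then αβ(a₁ - a₂)² = γδ(a₃ - a₄)². -/
theorem mul_mul_sub_sq_eq_add_mul_sub_sq {R : Type*} [CommRing R] (α β a b : R) :
    α * β * (a - b) ^ 2 = (α + β) * (α * a ^ 2 + β * b ^ 2) - (α * a + β * b) ^ 2 := by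
  ring

theorem stmt_0_general {F : Type*} [Field F]
    (α β γ δ a₁ a₂ a₃ a₄ : F)
    (hsum : α + β = γ + δ)
    (h1 : α * a₁ + β * a₂ = γ * a₃ + δ * a₄)
    (h2 : α * a₁ ^ 2 + β * a₂ ^ 2 = γ * a₃ ^ 2 + δ * a₄ ^ 2) :
    α * β * (a₁ - a₂) ^ 2 = γ * δ * (a₃ - a₄) ^ 2 := by
  rw [mul_mul_sub_sq_eq_add_mul_sub_sq, mul_mul_sub_sq_eq_add_mul_sub_sq, hsum, h1, h2]

theorem stmt_0 {F : Type*} [Field F] [Fintype F]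
    (α β γ δ a₁ a₂ a₃ a₄ : F)
    (hα : α ≠ 0) (hβ : β ≠ 0) (hγ : γ ≠ 0) (hδ : δ ≠ 0)
    (ha₁ : a₁ ≠ 0) (ha₂ : a₂ ≠ 0) (ha₃ : a₃ ≠ 0) (ha₄ : a₄ ≠ 0)
    (hsum : α + β = γ + δ)
    (h1 : α * a₁ + β * a₂ = γ * a₃ + δ * a₄)
    (h2 : α * a₁ ^ 2 + β * a₂ ^ 2 = γ * a₃ ^ 2 + δ * a₄ ^ 2) :
    α * β * (a₁ - a₂) ^ 2 = γ * δ * (a₃ - a₄) ^ 2 :=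
  stmt_0_general α β γ δ a₁ a₂ a₃ a₄ hsum h1 h2
end

section
/- Let α, β, γ be three distinct elements of a field and let a₁, a₂, a₃ be nonzero elements of the field. If 0 = α(a₂ - a₁) + β(a₃ - a₂) + γ(a₁ - a₃) and 0 = α(a₂² - a₁²) + β(a₃² - a₂²) + γ(a₁² - a₃²), then a₁ = a₂ = a₃. -/
/-!
Write `x = a₂ - a₁`, `y = a₃ - a₂`, `z = a₁ - a₃`, so that `x + y + z = 0`. Eliminating between the
two relations gives `(α - γ) x z = 0`, and the relations are invariant under rotating `(α, β, γ)` and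
`(a₁, a₂, a₃)` simultaneously, so also `(β - α) y x = 0` and `(γ - β) z y = 0`. Distinctness leaves
`x z = y x = z y = 0`, and then `x² = x (x + y + z) = 0`, likewise `y² = 0`.
-/

section

variable {R : Type*} [CommRing R]

theorem sub_mul_sub_mul_sub_eq_zero_of_weighted_sums (α β γ a₁ a₂ a₃ : R)
    (h1 : 0 = α * (a₂ - a₁) + β * (a₃ - a₂) + γ * (a₁ - a₃))
    (h2 : 0 = α * (a₂ ^ 2 - a₁ ^ 2) + β * (a₃ ^ 2 - a₂ ^ 2) + γ * (a₁ ^ 2 - a₃ ^ 2)) :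
    (α - γ) * ((a₂ - a₁) * (a₁ - a₃)) = 0 := by
  linear_combination -h2 + (a₃ + a₂) * h1

theorem eq_zero_of_add_add_eq_zero_of_mul_eq_zero [NoZeroDivisors R] {x y z : R}
    (hsum : x + y + z = 0) (hyx : y * x = 0) (hxz : x * z = 0) : x = 0 :=
  pow_eq_zero_iff two_ne_zero |>.mp <| by linear_combination x * hsum - hyx - hxz

end

theorem stmt_2_general {F : Type*} [Field F]
    (α β γ a₁ a₂ a₃ : F)
    (hαβ : α ≠ β) (hβγ : β ≠ γ) (hαγ : α ≠ γ)
    (h1 : 0 = α * (a₂ - a₁) + β * (a₃ - a₂) + γ * (a₁ - a₃))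
    (h2 : 0 = α * (a₂ ^ 2 - a₁ ^ 2) + β * (a₃ ^ 2 - a₂ ^ 2) + γ * (a₁ ^ 2 - a₃ ^ 2)) :
    a₁ = a₂ ∧ a₂ = a₃ := by
  have hxz := sub_mul_sub_mul_sub_eq_zero_of_weighted_sums α β γ a₁ a₂ a₃ h1 h2
  have hyx := sub_mul_sub_mul_sub_eq_zero_of_weighted_sums β γ α a₂ a₃ a₁
    (by linear_combination h1) (by linear_combination h2)
  have hzy := sub_mul_sub_mul_sub_eq_zero_of_weighted_sums γ α β a₃ a₁ a₂
    (by linear_combination h1) (by linear_combination h2)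
  replace hxz := (mul_eq_zero.mp hxz).resolve_left (sub_ne_zero.mpr hαγ)
  replace hyx := (mul_eq_zero.mp hyx).resolve_left (sub_ne_zero.mpr hαβ.symm)
  replace hzy := (mul_eq_zero.mp hzy).resolve_left (sub_ne_zero.mpr hβγ.symm)
  have hx := eq_zero_of_add_add_eq_zero_of_mul_eq_zero (by ring) hyx hxz
  have hy := eq_zero_of_add_add_eq_zero_of_mul_eq_zero (by ring) hzy hyx
  exact ⟨(sub_eq_zero.mp hx).symm, (sub_eq_zero.mp hy).symm⟩

theorem stmt_2 {F : Type*} [Field F]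
    (α β γ a₁ a₂ a₃ : F)
    (hαβ : α ≠ β) (hβγ : β ≠ γ) (hαγ : α ≠ γ)
    (ha₁ : a₁ ≠ 0) (ha₂ : a₂ ≠ 0) (ha₃ : a₃ ≠ 0)
    (h1 : 0 = α * (a₂ - a₁) + β * (a₃ - a₂) + γ * (a₁ - a₃))
    (h2 : 0 = α * (a₂ ^ 2 - a₁ ^ 2) + β * (a₃ ^ 2 - a₂ ^ 2) + γ * (a₁ ^ 2 - a₃ ^ 2)) :
    a₁ = a₂ ∧ a₂ = a₃ :=
  stmt_2_general α β γ a₁ a₂ a₃ hαβ hβγ hαγ h1 h2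
end

section
/- Let F_q be a finite field of odd order, let α₁, …, α_r be distinct elements of F_q, and let m₁, …, m_l be distinct nonzero elements of F_q. Define the r-uniform hypergraph H on vertex set F_q × F_q × {1,…,r} whose edges are e(x, y, a, m_s) = { (x + α_i·(m_s·a), y + α_i·(m_s·a²), i) : 1 ≤ i ≤ r } for x, y ∈ F_q, a ∈ F_q \ {0}, 1 ≤ s ≤ l. Then H is linear: any two distinct edges of H share at most one vertex. -/
/-- The edge `e(x, y, a, mₛ)` of the hypergraph `H` constructed by Timmons. -/
def timEdge {F : Type*} [Field F] [DecidableEq F] {r l : ℕ}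
    (α : Fin r → F) (m : Fin l → F) (x y a : F) (s : Fin l) :
    Finset (F × F × Fin r) :=
  Finset.univ.image (fun i => (x + α i * (m s * a), y + α i * (m s * a ^ 2), i))

/- Two common vertices of two edges lie in distinct layers `i ≠ j` (a vertex of an edge is
determined by its layer). Both edges are the values at `t = αᵢ, αⱼ` of lines
`t ↦ (x + t mₛ a, y + t mₛ a²)`, and two lines agreeing at two points have the same intercepts
`x, y` and slopes `mₛ a, mₛ a²`; the ratio of the slopes recovers `a`, then `mₛ`, hence `s`. -/

theorem eq_and_eq_of_add_mul_eq_add_mul {R : Type*} [CommRing R] [NoZeroDivisors R]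
    {c d u v u' v' : R} (hcd : c ≠ d)
    (hc : u + c * v = u' + c * v') (hd : u + d * v = u' + d * v') : u = u' ∧ v = v' := by
  have hprod : (c - d) * (v - v') = 0 := by linear_combination hc - hd
  have hv : v = v' := sub_eq_zero.mp ((mul_eq_zero.mp hprod).resolve_left (sub_ne_zero.mpr hcd))
  exact ⟨by linear_combination hc - c * hv, hv⟩

theorem eq_and_eq_of_mul_eq_of_mul_sq_eq {M : Type*} [CommMonoidWithZero M] [IsCancelMulZero M]
    {m m' a a' : M} (h0 : m * a ≠ 0)
    (h1 : m * a = m' * a') (h2 : m * a ^ 2 = m' * a' ^ 2) : a = a' ∧ m = m' := by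
  have ha : a = a' := by
    refine mul_left_cancel₀ h0 ?_
    calc m * a * a = m * a ^ 2 := by rw [sq, mul_assoc]
      _ = m' * a' ^ 2 := h2
      _ = m' * a' * a' := by rw [sq, mul_assoc]
      _ = m * a * a' := by rw [h1]
  subst ha
  exact ⟨rfl, mul_right_cancel₀ (right_ne_zero_of_mul h0) h1⟩

section TimmonsHypergraph

variable {F : Type*} [Field F] [DecidableEq F] {r l : ℕ} {α : Fin r → F} {m : Fin l → F}

theorem mem_timEdge {x y a : F} {s : Fin l} {p : F × F × Fin r} :
    p ∈ timEdge α m x y a s ↔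
      p.1 = x + α p.2.2 * (m s * a) ∧ p.2.1 = y + α p.2.2 * (m s * a ^ 2) := by
  obtain ⟨u, v, i⟩ := p
  simp [timEdge, eq_comm]

theorem timEdge_params_eq_of_two_common_points (hα : Function.Injective α)
    (hm : Function.Injective m) (hm0 : ∀ s, m s ≠ 0)
    {x₁ y₁ a₁ : F} {s₁ : Fin l} {x₂ y₂ a₂ : F} {s₂ : Fin l} (ha₁ : a₁ ≠ 0)
    {p q : F × F × Fin r} (hpq : p ≠ q)
    (hp₁ : p ∈ timEdge α m x₁ y₁ a₁ s₁) (hp₂ : p ∈ timEdge α m x₂ y₂ a₂ s₂)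
    (hq₁ : q ∈ timEdge α m x₁ y₁ a₁ s₁) (hq₂ : q ∈ timEdge α m x₂ y₂ a₂ s₂) :
    x₁ = x₂ ∧ y₁ = y₂ ∧ a₁ = a₂ ∧ s₁ = s₂ := by
  rw [mem_timEdge] at hp₁ hp₂ hq₁ hq₂
  have hlayer : α p.2.2 ≠ α q.2.2 := by
    intro h
    have hi := hα h
    exact hpq (Prod.ext (by rw [hp₁.1, hq₁.1, hi]) (Prod.ext (by rw [hp₁.2, hq₁.2, hi]) hi))
  obtain ⟨hx, hslope⟩ := eq_and_eq_of_add_mul_eq_add_mul hlayer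
    (hp₁.1.symm.trans hp₂.1) (hq₁.1.symm.trans hq₂.1)
  obtain ⟨hy, hslope_sq⟩ := eq_and_eq_of_add_mul_eq_add_mul hlayer
    (hp₁.2.symm.trans hp₂.2) (hq₁.2.symm.trans hq₂.2)
  obtain ⟨ha, hms⟩ :=
    eq_and_eq_of_mul_eq_of_mul_sq_eq (mul_ne_zero (hm0 s₁) ha₁) hslope hslope_sq
  exact ⟨hx, hy, ha, hm hms⟩

end TimmonsHypergraph

theorem stmt_4_general {F : Type*} [Field F] [DecidableEq F]
    {r l : ℕ}
    (α : Fin r → F) (m : Fin l → F)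
    (hα : Function.Injective α) (hm : Function.Injective m) (hm0 : ∀ s, m s ≠ 0)
    (x₁ y₁ a₁ : F) (s₁ : Fin l) (x₂ y₂ a₂ : F) (s₂ : Fin l)
    (ha₁ : a₁ ≠ 0)
    (hne : timEdge α m x₁ y₁ a₁ s₁ ≠ timEdge α m x₂ y₂ a₂ s₂) :
    (timEdge α m x₁ y₁ a₁ s₁ ∩ timEdge α m x₂ y₂ a₂ s₂).card ≤ 1 := by
  refine Finset.card_le_one.mpr fun p hp q hq => by_contra fun hpq => hne ?_
  rw [Finset.mem_inter] at hp hq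
  obtain ⟨rfl, rfl, rfl, rfl⟩ :=
    timEdge_params_eq_of_two_common_points hα hm hm0 ha₁ hpq hp.1 hp.2 hq.1 hq.2
  rfl

/-- The hypergraph `H` is linear: any two distinct edges share at most one vertex. -/
theorem stmt_4 {F : Type*} [Field F] [Fintype F] [DecidableEq F]
    (hodd : Odd (Fintype.card F)) {r l : ℕ}
    (α : Fin r → F) (m : Fin l → F)
    (hα : Function.Injective α) (hm : Function.Injective m) (hm0 : ∀ s, m s ≠ 0)
    (x₁ y₁ a₁ : F) (s₁ : Fin l) (x₂ y₂ a₂ : F) (s₂ : Fin l)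
    (ha₁ : a₁ ≠ 0) (ha₂ : a₂ ≠ 0)
    (hne : timEdge α m x₁ y₁ a₁ s₁ ≠ timEdge α m x₂ y₂ a₂ s₂) :
    (timEdge α m x₁ y₁ a₁ s₁ ∩ timEdge α m x₂ y₂ a₂ s₂).card ≤ 1 :=
  stmt_4_general α m hα hm hm0 x₁ y₁ a₁ s₁ x₂ y₂ a₂ s₂ ha₁ hne
end

section
/- With the hypergraph H defined from distinct α₁, …, α_r ∈ F_q and a single nonzero multiplier m₁ (i.e., l = 1), if three distinct edges e(x₁,y₁,a₁,m₁), e(x₂,y₂,a₂,m₁), e(x₃,y₃,a₃,m₁) pairwise intersect in vertices lying in three distinct parts V_i, V_j, V_k (with i, j, k distinct), then the edges coincide — that is, H contains no Berge triangle of this form. Equivalently: if x₁ + α_i m₁ a₁ = x₂ + α_i m₁ a₂, y₁ + α_i m₁ a₁² = y₂ + α_i m₁ a₂², x₂ + α_j m₁ a₂ = x₃ + α_j m₁ a₃, y₂ + α_j m₁ a₂² = y₃ + α_j m₁ a₃², x₃ + α_k m₁ a₃ = x₁ + α_k m₁ a₁, and y₃ + α_k m₁ a₃² = y₁ + α_k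 m₁ a₁², with a₁, a₂, a₃ nonzero and α_i, α_j, α_k distinct, then (x₁,y₁,a₁) = (x₂,y₂,a₂) = (x₃,y₃,a₃). -/
/-!
Summing the three intersection conditions around the triangle eliminates the `x`'s and the `y`'s,
leaving `∑ α (a_t - a_{t+1}) = 0` and `∑ α (a_t² - a_{t+1}²) = 0`. A combination of these two
relations is `(α_i - α_k)(α_j - α_i)(a₁ - a₂)² = 0`, so `a₁ = a₂` because the `α`'s are distinct, and
likewise `a₂ = a₃`. With equal `a`'s the intersection conditions read `x₁ = x₂`, `y₁ = y₂`, etc.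
-/

section CyclicSums

variable {R : Type*} [CommRing R] [IsDomain R]

theorem cyclic_sum_eq_zero_of_shifts_eq {αi αj αk m x₁ x₂ x₃ b₁ b₂ b₃ : R} (hm : m ≠ 0)
    (h₁₂ : x₁ + αi * m * b₁ = x₂ + αi * m * b₂) (h₂₃ : x₂ + αj * m * b₂ = x₃ + αj * m * b₃)
    (h₃₁ : x₃ + αk * m * b₃ = x₁ + αk * m * b₁) :
    αi * (b₁ - b₂) + αj * (b₂ - b₃) + αk * (b₃ - b₁) = 0 := by
  have h : m * (αi * (b₁ - b₂) + αj * (b₂ - b₃) + αk * (b₃ - b₁)) = 0 := by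
    linear_combination h₁₂ + h₂₃ + h₃₁
  exact (mul_eq_zero.1 h).resolve_left hm

theorem eq_of_cyclic_sums_eq_zero {αi αj αk a₁ a₂ a₃ : R} (hij : αi ≠ αj) (hik : αi ≠ αk)
    (hlin : αi * (a₁ - a₂) + αj * (a₂ - a₃) + αk * (a₃ - a₁) = 0)
    (hquad : αi * (a₁ ^ 2 - a₂ ^ 2) + αj * (a₂ ^ 2 - a₃ ^ 2) + αk * (a₃ ^ 2 - a₁ ^ 2) = 0) :
    a₁ = a₂ := by
  have hsq : ((αi - αk) * (αj - αi)) * (a₁ - a₂) ^ 2 = 0 := by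
    linear_combination (-(αj - αi) * (a₂ + a₃) - (αi - αk) * (a₁ + a₃)) * hlin
      + (αj - αk) * hquad
  have hα : (αi - αk) * (αj - αi) ≠ 0 := mul_ne_zero (sub_ne_zero.2 hik) (sub_ne_zero.2 hij.symm)
  exact sub_eq_zero.1 (pow_eq_zero_iff two_ne_zero |>.1 ((mul_eq_zero.1 hsq).resolve_left hα))

end CyclicSums

theorem stmt_5_general {F : Type*} [Field F]
    (αi αj αk m₁ : F)
    (hij : αi ≠ αj) (hjk : αj ≠ αk) (hik : αi ≠ αk) (hm : m₁ ≠ 0)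
    (x₁ y₁ a₁ x₂ y₂ a₂ x₃ y₃ a₃ : F)
    (e1x : x₁ + αi * m₁ * a₁ = x₂ + αi * m₁ * a₂)
    (e1y : y₁ + αi * m₁ * a₁ ^ 2 = y₂ + αi * m₁ * a₂ ^ 2)
    (e2x : x₂ + αj * m₁ * a₂ = x₃ + αj * m₁ * a₃)
    (e2y : y₂ + αj * m₁ * a₂ ^ 2 = y₃ + αj * m₁ * a₃ ^ 2)
    (e3x : x₃ + αk * m₁ * a₃ = x₁ + αk * m₁ * a₁)
    (e3y : y₃ + αk * m₁ * a₃ ^ 2 = y₁ + αk * m₁ * a₁ ^ 2) :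
    (x₁, y₁, a₁) = (x₂, y₂, a₂) ∧ (x₂, y₂, a₂) = (x₃, y₃, a₃) := by
  have hlin := cyclic_sum_eq_zero_of_shifts_eq hm e1x e2x e3x
  have hquad := cyclic_sum_eq_zero_of_shifts_eq hm e1y e2y e3y
  have ha₁₂ : a₁ = a₂ := eq_of_cyclic_sums_eq_zero hij hik hlin hquad
  have ha₂₃ : a₂ = a₃ :=
    eq_of_cyclic_sums_eq_zero (a₁ := a₂) (a₂ := a₃) (a₃ := a₁) hjk hij.symm
      (by linear_combination hlin) (by linear_combination hquad)
  subst ha₁₂ ha₂₃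
  obtain rfl := add_right_cancel e1x
  obtain rfl := add_right_cancel e1y
  obtain rfl := add_right_cancel e2x
  obtain rfl := add_right_cancel e2y
  exact ⟨rfl, rfl⟩

theorem stmt_5 {F : Type*} [Field F] [Fintype F]
    (hodd : Odd (Fintype.card F))
    (αi αj αk m₁ : F)
    (hij : αi ≠ αj) (hjk : αj ≠ αk) (hik : αi ≠ αk) (hm : m₁ ≠ 0)
    (x₁ y₁ a₁ x₂ y₂ a₂ x₃ y₃ a₃ : F)
    (ha₁ : a₁ ≠ 0) (ha₂ : a₂ ≠ 0) (ha₃ : a₃ ≠ 0)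
    (e1x : x₁ + αi * m₁ * a₁ = x₂ + αi * m₁ * a₂)
    (e1y : y₁ + αi * m₁ * a₁ ^ 2 = y₂ + αi * m₁ * a₂ ^ 2)
    (e2x : x₂ + αj * m₁ * a₂ = x₃ + αj * m₁ * a₃)
    (e2y : y₂ + αj * m₁ * a₂ ^ 2 = y₃ + αj * m₁ * a₃ ^ 2)
    (e3x : x₃ + αk * m₁ * a₃ = x₁ + αk * m₁ * a₁)
    (e3y : y₃ + αk * m₁ * a₃ ^ 2 = y₁ + αk * m₁ * a₁ ^ 2) :
    (x₁, y₁, a₁) = (x₂, y₂, a₂) ∧ (x₂, y₂, a₂) = (x₃, y₃, a₃) :=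
  stmt_5_general αi αj αk m₁ hij hjk hik hm x₁ y₁ a₁ x₂ y₂ a₂ x₃ y₃ a₃ e1x e1y e2x e2y e3x e3y
end

section
/- Fix distinct α_i, α_j in a finite field F_q of odd order and a nonzero m_s ∈ F_q. Define a bipartite graph on two copies of F_q × F_q where (u, v) is adjacent to (u', v') iff there exists nonzero a ∈ F_q with u' = u + m_s(α_j - α_i)a and v' = v + m_s(α_j - α_i)a². Then this graph contains no K_{2,2}: there do not exist distinct (u₁,v₁), (u₃,v₃) in the first copy and distinct (u₂,v₂), (u₄,v₄) in the second copy with all four adjacencies present. -/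
theorem eq_of_sub_eq_of_sq_sub_sq_eq {R : Type*} [CommRing R] [NoZeroDivisors R]
    (h2 : (2 : R) ≠ 0) {a b a' b' : R} (hab : a ≠ b)
    (hd : a - b = a' - b') (hsq : a ^ 2 - b ^ 2 = a' ^ 2 - b' ^ 2) : a = a' := by
  have hsum : a + b = a' + b' := by
    refine mul_left_cancel₀ (sub_ne_zero.mpr hab) ?_
    linear_combination hsq - (a' + b') * hd
  exact mul_left_cancel₀ h2 (by linear_combination hsum + hd)

theorem FiniteField.two_ne_zero_of_odd_card {F : Type*} [Field F] [Fintype F]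
    (hodd : Odd (Fintype.card F)) : (2 : F) ≠ 0 :=
  Ring.two_ne_zero fun h ↦ by
    simpa [Nat.odd_iff.mp hodd] using FiniteField.even_card_iff_char_two.mp h

def ParabolaAdj {R : Type*} [CommRing R] (c : R) (p q : R × R) : Prop :=
  ∃ a, q.1 = p.1 + c * a ∧ q.2 = p.2 + c * a ^ 2

/-- The parameters `a, b` of a common neighbour satisfy `c (a - b) = Δx` and `c (a² - b²) = Δy`,
which fix `a - b ≠ 0` and then `a + b`. -/
theorem ParabolaAdj.eq_of_common {R : Type*} [CommRing R] [NoZeroDivisors R]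
    (h2 : (2 : R) ≠ 0) {c : R} (hc : c ≠ 0) {p₁ p₃ q q' : R × R} (hp : p₁ ≠ p₃)
    (h₁ : ParabolaAdj c p₁ q) (h₃ : ParabolaAdj c p₃ q)
    (h₁' : ParabolaAdj c p₁ q') (h₃' : ParabolaAdj c p₃ q') : q = q' := by
  obtain ⟨a, ha₁, ha₂⟩ := h₁
  obtain ⟨b, hb₁, hb₂⟩ := h₃
  obtain ⟨a', ha₁', ha₂'⟩ := h₁'
  obtain ⟨b', hb₁', hb₂'⟩ := h₃'
  have hab : a ≠ b := by
    rintro rfl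
    exact hp (Prod.ext (by linear_combination hb₁ - ha₁) (by linear_combination hb₂ - ha₂))
  have hd : a - b = a' - b' := mul_left_cancel₀ hc <| by
    linear_combination hb₁ - ha₁ - hb₁' + ha₁'
  have hsq : a ^ 2 - b ^ 2 = a' ^ 2 - b' ^ 2 := mul_left_cancel₀ hc <| by
    linear_combination hb₂ - ha₂ - hb₂' + ha₂'
  obtain rfl := eq_of_sub_eq_of_sq_sub_sq_eq h2 hab hd hsq
  exact Prod.ext (ha₁.trans ha₁'.symm) (ha₂.trans ha₂'.symm)

/-- The single–color bipartite link graph `H(Vᵢ, Vⱼ)` contains no `K_{2,2}`. -/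
theorem stmt_6 {F : Type*} [Field F] [Fintype F]
    (hodd : Odd (Fintype.card F))
    (αi αj ms : F) (hij : αi ≠ αj) (hms : ms ≠ 0) :
    ¬ ∃ p₁ p₃ p₂ p₄ : F × F, p₁ ≠ p₃ ∧ p₂ ≠ p₄ ∧
      (∃ a : F, a ≠ 0 ∧ p₂.1 = p₁.1 + ms * (αj - αi) * a ∧ p₂.2 = p₁.2 + ms * (αj - αi) * a ^ 2) ∧
      (∃ a : F, a ≠ 0 ∧ p₄.1 = p₁.1 + ms * (αj - αi) * a ∧ p₄.2 = p₁.2 + ms * (αj - αi) * a ^ 2) ∧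
      (∃ a : F, a ≠ 0 ∧ p₂.1 = p₃.1 + ms * (αj - αi) * a ∧ p₂.2 = p₃.2 + ms * (αj - αi) * a ^ 2) ∧
      (∃ a : F, a ≠ 0 ∧ p₄.1 = p₃.1 + ms * (αj - αi) * a ∧ p₄.2 = p₃.2 + ms * (αj - αi) * a ^ 2) := by
  rintro ⟨p₁, p₃, p₂, p₄, h13, h24, ⟨a, -, h12⟩, ⟨b, -, h14⟩, ⟨a', -, h32⟩, ⟨b', -, h34⟩⟩
  have hc : ms * (αj - αi) ≠ 0 := mul_ne_zero hms (sub_ne_zero.mpr hij.symm)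
  exact h24 <| ParabolaAdj.eq_of_common (FiniteField.two_ne_zero_of_odd_card hodd) hc h13
    ⟨a, h12⟩ ⟨a', h32⟩ ⟨b, h14⟩ ⟨b', h34⟩
end

section
/- Let r ≥ 3 and t ≥ 1 be integers, and let F be an n-vertex r-uniform hypergraph with m edges that is linear (any two distinct edges share at most one vertex), contains no Berge triangle, and contains no Berge-K_{2,t+1}. Then t·n(n-1)/2 ≥ n(r-1)²·f(rm/n), where f(x) = x(x-1)/2 for x ≥ 2 and f(x) = 0 otherwise; consequently m ≤ (√t / (r(r-1)))·n^{3/2} + n/r. -/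
/-!
Count the Berge paths `x, e, v, f, y` with `e ≠ f` and `x, y ≠ v`: a vertex of degree `d` is the
middle of `d(d - 1)(r - 1)²` of them. By linearity such a path is determined by its endpoints and
its middle vertex, and in the absence of Berge triangles `t + 1` paths with the same endpoints
`x ≠ y` would form a Berge-`K_{2,t+1}`. Hence `(r - 1)² ∑ d(d - 1) ≤ t n(n - 1)`, and
Cauchy–Schwarz for the degrees, which sum to `r m`, gives both bounds.
-/

/-- A Berge triangle in a hypergraph: three distinct vertices and three distinct
edges forming a Berge-C₃. -/
def BergeTriangle {V : Type*} (H : Finset (Finset V)) : Prop :=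
  ∃ (v₁ v₂ v₃ : V) (e₁ e₂ e₃ : Finset V),
    v₁ ≠ v₂ ∧ v₂ ≠ v₃ ∧ v₁ ≠ v₃ ∧ e₁ ≠ e₂ ∧ e₂ ≠ e₃ ∧ e₁ ≠ e₃ ∧
    e₁ ∈ H ∧ e₂ ∈ H ∧ e₃ ∈ H ∧
    v₁ ∈ e₁ ∧ v₂ ∈ e₁ ∧ v₂ ∈ e₂ ∧ v₃ ∈ e₂ ∧ v₃ ∈ e₃ ∧ v₁ ∈ e₃

/-- A Berge-K_{2,t} in a hypergraph: distinct vertices `x, y, v₁, …, v_t` and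
`2t` distinct edges `eᵢ, fᵢ` with `{x, vᵢ} ⊆ eᵢ` and `{y, vᵢ} ⊆ fᵢ`. -/
def BergeK2 {V : Type*} (t : ℕ) (H : Finset (Finset V)) : Prop :=
  ∃ (x y : V) (v : Fin t → V) (e f : Fin t → Finset V),
    Function.Injective v ∧ x ≠ y ∧ (∀ i, x ≠ v i) ∧ (∀ i, y ≠ v i) ∧
    (∀ i, e i ∈ H) ∧ (∀ i, f i ∈ H) ∧
    Function.Injective e ∧ Function.Injective f ∧ (∀ i j, e i ≠ f j) ∧
    (∀ i, x ∈ e i ∧ v i ∈ e i ∧ y ∈ f i ∧ v i ∈ f i)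

/-- The convex function `f(x) = x(x-1)/2` for `x ≥ 2` and `0` otherwise. -/
noncomputable def convChoose (x : ℝ) : ℝ := if 2 ≤ x then x * (x - 1) / 2 else 0

open Finset

/-- The Berge path `x, e, v, f, y` is encoded as `⟨v, (e, f), (x, y)⟩`. -/
abbrev BergePath (V : Type*) := Σ _ : V, Σ _ : Finset V × Finset V, V × V

section Hypergraph

variable {V : Type*} [DecidableEq V] {H : Finset (Finset V)}

def IsLinear (H : Finset (Finset V)) : Prop := ∀ e ∈ H, ∀ f ∈ H, e ≠ f → #(e ∩ f) ≤ 1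

def incidentEdges (H : Finset (Finset V)) (v : V) : Finset (Finset V) := {e ∈ H | v ∈ e}

lemma sum_card_incidentEdges [Fintype V] (H : Finset (Finset V)) :
    ∑ v, #(incidentEdges H v) = ∑ e ∈ H, #e := by
  simp only [incidentEdges, card_filter]
  rw [sum_comm]
  refine sum_congr rfl fun e _ => ?_
  rw [← card_filter, filter_univ_mem]

lemma IsLinear.eq_of_mem_of_mem (hH : IsLinear H) {e f : Finset V} (he : e ∈ H) (hf : f ∈ H)
    {a b : V} (hab : a ≠ b) (hae : a ∈ e) (hbe : b ∈ e) (haf : a ∈ f) (hbf : b ∈ f) : e = f := by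
  by_contra hef
  exact (hH e he f hf hef).not_gt
    (one_lt_card.2 ⟨a, mem_inter.2 ⟨hae, haf⟩, b, mem_inter.2 ⟨hbe, hbf⟩, hab⟩)

lemma IsLinear.eq_of_not_bergeTriangle (hH : IsLinear H) (hC3 : ¬ BergeTriangle H)
    {e f₁ f₂ : Finset V} (he : e ∈ H) (hf₁ : f₁ ∈ H) (hf₂ : f₂ ∈ H) (hef₁ : e ≠ f₁)
    (hef₂ : e ≠ f₂) {v₁ v₂ y : V} (hv₁e : v₁ ∈ e) (hv₂e : v₂ ∈ e) (hv₁f : v₁ ∈ f₁)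
    (hv₂f : v₂ ∈ f₂) (hy₁ : y ∈ f₁) (hy₂ : y ∈ f₂) (hyv₁ : y ≠ v₁) (hyv₂ : y ≠ v₂) :
    v₁ = v₂ := by
  by_contra hv
  by_cases hf : f₁ = f₂
  · subst hf
    exact hef₁ (hH.eq_of_mem_of_mem he hf₁ hv hv₁e hv₂e hv₁f hv₂f)
  · exact hC3 ⟨v₁, v₂, y, e, f₂, f₁, hv, Ne.symm hyv₂, Ne.symm hyv₁, hef₂, Ne.symm hf, hef₁,
      he, hf₂, hf₁, hv₁e, hv₂e, hv₂f, hy₂, hy₁, hv₁f⟩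

lemma IsLinear.bergeK2_of_paths (hH : IsLinear H) (hC3 : ¬ BergeTriangle H) {k : ℕ} {x y : V}
    (hxy : x ≠ y) {v : Fin k → V} {e f : Fin k → Finset V} (hv : Function.Injective v)
    (he : ∀ i, e i ∈ H) (hf : ∀ i, f i ∈ H) (hef : ∀ i, e i ≠ f i)
    (hve : ∀ i, v i ∈ e i) (hvf : ∀ i, v i ∈ f i)
    (hx : ∀ i, x ∈ e i ∧ x ≠ v i) (hy : ∀ i, y ∈ f i ∧ y ≠ v i) : BergeK2 k H := by
  refine ⟨x, y, v, e, f, hv, hxy, fun i => (hx i).2, fun i => (hy i).2, he, hf, ?_, ?_, ?_,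
    fun i => ⟨(hx i).1, hve i, (hy i).1, hvf i⟩⟩
  · intro i j hij
    exact hv <| hH.eq_of_not_bergeTriangle hC3 (he i) (hf i) (hf j) (hef i) (hij ▸ hef j) (hve i)
      (hij ▸ hve j) (hvf i) (hvf j) (hy i).1 (hy j).1 (hy i).2 (hy j).2
  · intro i j hij
    exact hv <| hH.eq_of_not_bergeTriangle hC3 (hf i) (he i) (he j) (hef i).symm
      (hij ▸ (hef j).symm) (hvf i) (hij ▸ hvf j) (hve i) (hve j) (hx i).1 (hx j).1 (hx i).2 (hx j).2
  · intro i j hij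
    exact hef i <| hH.eq_of_mem_of_mem (he i) (hf i) (hy i).2 (hij ▸ (hy j).1) (hve i)
      (hy i).1 (hvf i)

variable [Fintype V]

def bergePaths (H : Finset (Finset V)) : Finset (BergePath V) :=
  univ.sigma fun v => (incidentEdges H v).offDiag.sigma fun p => p.1.erase v ×ˢ p.2.erase v

lemma mem_bergePaths {p : BergePath V} :
    p ∈ bergePaths H ↔ p.2.1.1 ∈ H ∧ p.2.1.2 ∈ H ∧ p.2.1.1 ≠ p.2.1.2 ∧ p.1 ∈ p.2.1.1 ∧
      p.1 ∈ p.2.1.2 ∧ (p.2.2.1 ∈ p.2.1.1 ∧ p.2.2.1 ≠ p.1) ∧ (p.2.2.2 ∈ p.2.1.2 ∧ p.2.2.2 ≠ p.1) := by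
  simp only [bergePaths, incidentEdges, mem_sigma, mem_offDiag, mem_filter, mem_product,
    mem_erase, mem_univ, true_and]
  tauto

lemma card_bergePaths {r : ℕ} (hunif : ∀ e ∈ H, #e = r) :
    #(bergePaths H) = (∑ v, #(incidentEdges H v).offDiag) * (r - 1) ^ 2 := by
  rw [bergePaths, card_sigma, sum_mul]
  refine sum_congr rfl fun v _ => ?_
  rw [card_sigma, ← smul_eq_mul, ← sum_const]
  refine sum_congr rfl fun p hp => ?_
  simp only [incidentEdges, mem_offDiag, mem_filter] at hp
  rw [card_product, card_erase_of_mem hp.1.2, card_erase_of_mem hp.2.1.2, hunif _ hp.1.1,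
    hunif _ hp.2.1.1, sq]

lemma IsLinear.bergePaths_ends_ne (hH : IsLinear H) {p : BergePath V}
    (hp : p ∈ bergePaths H) : p.2.2.1 ≠ p.2.2.2 := by
  obtain ⟨he, hf, hef, hve, hvf, ⟨hxe, hxv⟩, hyf, -⟩ := mem_bergePaths.1 hp
  intro hxy
  exact hef (hH.eq_of_mem_of_mem he hf hxv hxe hve (hxy ▸ hyf) hvf)

lemma IsLinear.bergePaths_eq_of_mid_eq (hH : IsLinear H) {p q : BergePath V}
    (hp : p ∈ bergePaths H) (hq : q ∈ bergePaths H) (hends : p.2.2 = q.2.2) (hmid : p.1 = q.1) :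
    p = q := by
  obtain ⟨v, ⟨e, f⟩, ⟨x, y⟩⟩ := p
  obtain ⟨v', ⟨e', f'⟩, ⟨x', y'⟩⟩ := q
  obtain ⟨he, hf, -, hve, hvf, ⟨hxe, hxv⟩, hyf, hyv⟩ := mem_bergePaths.1 hp
  obtain ⟨he', hf', -, hve', hvf', ⟨hxe', -⟩, hyf', -⟩ := mem_bergePaths.1 hq
  simp only [Prod.mk.injEq] at hends hmid hxe hyf hve hvf hxv hyv
  obtain ⟨rfl, rfl⟩ := hends
  subst hmid
  obtain rfl := hH.eq_of_mem_of_mem he he' hxv hxe hve hxe' hve'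
  obtain rfl := hH.eq_of_mem_of_mem hf hf' hyv hyf hvf hyf' hvf'
  rfl

lemma IsLinear.card_filter_bergePaths_le (hH : IsLinear H) (hC3 : ¬ BergeTriangle H) {t : ℕ}
    (hK : ¬ BergeK2 (t + 1) H) (z : V × V) : #{p ∈ bergePaths H | p.2.2 = z} ≤ t := by
  by_contra! hz
  obtain ⟨φ, hφ⟩ := Function.Embedding.exists_of_card_le_finset (α := Fin (t + 1))
    (by simpa using hz)
  have hφ' : ∀ i, φ i ∈ bergePaths H ∧ (φ i).2.2 = z := fun i =>
    mem_filter.1 (hφ (Set.mem_range_self i))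
  have hφH := fun i => mem_bergePaths.1 (hφ' i).1
  have hends : ∀ i, (φ i).2.2.1 = z.1 ∧ (φ i).2.2.2 = z.2 := fun i => by rw [(hφ' i).2]; simp
  refine hK (hH.bergeK2_of_paths hC3 (v := fun i => (φ i).1) (e := fun i => (φ i).2.1.1)
    (f := fun i => (φ i).2.1.2) ?_ ?_ (fun i => (hφH i).1) (fun i => (hφH i).2.1)
    (fun i => (hφH i).2.2.1) (fun i => (hφH i).2.2.2.1) (fun i => (hφH i).2.2.2.2.1)
    (fun i => (hends i).1 ▸ (hφH i).2.2.2.2.2.1) (fun i => (hends i).2 ▸ (hφH i).2.2.2.2.2.2))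
  · rw [← (hends 0).1, ← (hends 0).2]
    exact hH.bergePaths_ends_ne (hφ' 0).1
  · intro i j hij
    exact φ.injective <| hH.bergePaths_eq_of_mid_eq (hφ' i).1 (hφ' j).1
      ((hφ' i).2.trans (hφ' j).2.symm) hij

/-- Double counting of `bergePaths H` by middle vertex and by endpoints. -/
theorem IsLinear.sum_card_offDiag_incidentEdges_le (hH : IsLinear H) (hC3 : ¬ BergeTriangle H)
    {r t : ℕ} (hunif : ∀ e ∈ H, #e = r) (hK : ¬ BergeK2 (t + 1) H) :
    (∑ v, #(incidentEdges H v).offDiag) * (r - 1) ^ 2 ≤ t * #(univ : Finset V).offDiag := by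
  rw [← card_bergePaths hunif]
  refine card_le_mul_card_image_of_maps_to (fun p hp => ?_) t
    (fun z _ => hH.card_filter_bergePaths_le hC3 hK z)
  exact mem_offDiag.2 ⟨mem_univ _, mem_univ _, hH.bergePaths_ends_ne hp⟩

end Hypergraph

lemma Finset.natCast_card_offDiag {α R : Type*} [DecidableEq α] [Ring R] (s : Finset α) :
    (#s.offDiag : R) = #s * (#s - 1) := by
  rw [offDiag_card, Nat.cast_sub (Nat.le_mul_self _), Nat.cast_mul, mul_sub_one]

lemma sq_sum_card_le_card_mul {ι α : Type*} [DecidableEq α] (I : Finset ι) (s : ι → Finset α) :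
    (∑ i ∈ I, (#(s i) : ℝ)) ^ 2 ≤ #I * (∑ i ∈ I, (#(s i).offDiag : ℝ) + ∑ i ∈ I, (#(s i) : ℝ)) := by
  rw [← sum_add_distrib]
  refine (sq_sum_le_card_mul_sum_sq (s := I) (f := fun i => (#(s i) : ℝ))).trans_eq
    (congrArg _ (sum_congr rfl fun i _ => ?_))
  rw [natCast_card_offDiag]
  ring

section Estimates

/- `S` plays the role of `∑ d(d - 1)` for degrees `d` summing to `M = r m` over `n` vertices, so
that `hCS` is Cauchy–Schwarz, `M² ≤ n ∑ d²`. -/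
variable {n k t M S : ℝ}

lemma mul_convChoose_div_le (hn : 0 ≤ n) (hS : 0 ≤ S) (hCS : M ^ 2 ≤ n * (S + M))
    (hK : k ^ 2 * S ≤ t * n * (n - 1)) : n * k ^ 2 * convChoose (M / n) ≤ t * n * (n - 1) / 2 := by
  unfold convChoose
  split_ifs with h2
  · have hn : 0 < n := hn.lt_of_ne fun h => by norm_num [← h] at h2
    calc n * k ^ 2 * (M / n * (M / n - 1) / 2) = k ^ 2 * ((M ^ 2 - n * M) / n) / 2 := by
          field_simp
      _ ≤ k ^ 2 * S / 2 := by
          gcongr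
          rw [div_le_iff₀ hn]
          linarith
      _ ≤ t * n * (n - 1) / 2 := by linarith
  · nlinarith [mul_nonneg (sq_nonneg k) hS]

lemma le_sqrt_mul_rpow_add {r m : ℝ} (hn : 0 ≤ n) (hr : 1 < r) (ht : 0 ≤ t)
    (hCS : (r * m) ^ 2 ≤ n * (S + r * m)) (hK : (r - 1) ^ 2 * S ≤ t * n * (n - 1)) :
    m ≤ √t / (r * (r - 1)) * n ^ (3 / 2 : ℝ) + n / r := by
  have hr1 : 0 < r - 1 := by linarith
  suffices h : (r - 1) * (r * m - n) ≤ √t * n ^ (3 / 2 : ℝ) by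
    rw [div_mul_eq_mul_div, div_add_div _ _ (by positivity) (by positivity),
      le_div_iff₀ (by positivity)]
    nlinarith
  rcases le_or_gt (r * m) n with hmn | hmn
  · exact (mul_nonpos_of_nonneg_of_nonpos hr1.le (by linarith)).trans (by positivity)
  have hsq : ((r - 1) * (r * m - n)) ^ 2 ≤ t * n ^ 3 := calc
    ((r - 1) * (r * m - n)) ^ 2 ≤ (r - 1) ^ 2 * ((r * m) ^ 2 - n * (r * m)) := by
        rw [mul_pow]
        gcongr
        nlinarith
    _ ≤ n * ((r - 1) ^ 2 * S) := by nlinarith [sq_nonneg (r - 1)]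
    _ ≤ n * (t * n * (n - 1)) := by gcongr
    _ ≤ t * n ^ 3 := by nlinarith [mul_nonneg ht (sq_nonneg n)]
  have hroot : √(t * n ^ 3) = √t * n ^ (3 / 2 : ℝ) := by
    rw [Real.sqrt_mul ht, Real.sqrt_eq_rpow (n ^ 3), ← Real.rpow_natCast, ← Real.rpow_mul hn]
    norm_num
  exact hroot ▸ Real.le_sqrt_of_sq_le hsq

end Estimates

theorem stmt_9_general {V : Type*} [Fintype V] [DecidableEq V]
    (r t n m : ℕ) (hr : 3 ≤ r)
    (H : Finset (Finset V)) (hn : Fintype.card V = n) (hm : H.card = m)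
    (hunif : ∀ e ∈ H, e.card = r)
    (hlinear : ∀ e ∈ H, ∀ f ∈ H, e ≠ f → (e ∩ f).card ≤ 1)
    (hC3 : ¬ BergeTriangle H)
    (hK2t : ¬ BergeK2 (t + 1) H) :
    (t : ℝ) * n * (n - 1) / 2 ≥ (n : ℝ) * ((r : ℝ) - 1) ^ 2 * convChoose (r * m / n) ∧
    (m : ℝ) ≤ Real.sqrt t / ((r : ℝ) * ((r : ℝ) - 1)) * (n : ℝ) ^ ((3 : ℝ) / 2) + (n : ℝ) / r := by
  subst hn hm
  set S : ℝ := ∑ v, (#(incidentEdges H v).offDiag : ℝ)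
  have hr1 : (1 : ℝ) < r := by exact_mod_cast (by omega : 1 < r)
  have hM : ∑ v, (#(incidentEdges H v) : ℝ) = r * #H := by
    rw [← Nat.cast_sum, sum_card_incidentEdges, sum_congr rfl hunif, sum_const, smul_eq_mul]
    push_cast
    ring
  have hK : ((r : ℝ) - 1) ^ 2 * S ≤ t * Fintype.card V * (Fintype.card V - 1) := by
    have h := Nat.cast_le (α := ℝ) |>.2 <|
      IsLinear.sum_card_offDiag_incidentEdges_le hlinear hC3 hunif hK2t
    push_cast [Nat.cast_sub (by omega : 1 ≤ r)] at h
    rw [natCast_card_offDiag, card_univ] at h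
    linarith
  have hCS : ((r : ℝ) * #H) ^ 2 ≤ Fintype.card V * (S + r * #H) := by
    simpa only [hM, card_univ] using sq_sum_card_le_card_mul univ (incidentEdges H)
  exact ⟨mul_convChoose_div_le (by positivity) (sum_nonneg fun _ _ => Nat.cast_nonneg _) hCS hK,
    le_sqrt_mul_rpow_add (by positivity) hr1 (by positivity) hCS hK⟩

theorem stmt_9 {V : Type*} [Fintype V] [DecidableEq V]
    (r t n m : ℕ) (hr : 3 ≤ r) (ht : 1 ≤ t)
    (H : Finset (Finset V)) (hn : Fintype.card V = n) (hm : H.card = m)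
    (hunif : ∀ e ∈ H, e.card = r)
    (hlinear : ∀ e ∈ H, ∀ f ∈ H, e ≠ f → (e ∩ f).card ≤ 1)
    (hC3 : ¬ BergeTriangle H)
    (hK2t : ¬ BergeK2 (t + 1) H) :
    (t : ℝ) * n * (n - 1) / 2 ≥ (n : ℝ) * ((r : ℝ) - 1) ^ 2 * convChoose (r * m / n) ∧
    (m : ℝ) ≤ Real.sqrt t / ((r : ℝ) * ((r : ℝ) - 1)) * (n : ℝ) ^ ((3 : ℝ) / 2) + (n : ℝ) / r :=
  stmt_9_general r t n m hr H hn hm hunif hlinear hC3 hK2t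
end

section
/- For every power q of an odd prime with q ≥ 3, there exists a 3-uniform 3-partite linear hypergraph with q² vertices in each part and q²(q-1) edges that contains no Berge triangle and no Berge-K_{2,3}. Consequently, the maximum number of edges z₃(n, {C₂, C₃, K_{2,3}}) in such a hypergraph with n vertices per part satisfies z₃(n, {C₂,C₃,K_{2,3}}) ≥ n^{3/2}(1 - o(1)) along the sequence n = q². -/
/-!
Each part is a copy of the plane `F²`, and the edge with base point `a` and slope `m ≠ 0`
consists of the points `a + αᵢ • (m, m²)`, one in part `i`. Two vertices of an edge therefore
differ by a multiple of a point of the parabola `y = x²`, determined by the slope. Linearity is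
then the injectivity of `m ↦ (m, m²)`; a Berge triangle would give a nontrivial affine relation
between three distinct points of the parabola; and a Berge-`K_{2,3}` would give three points in
the intersection of the parabola with a translate (at most one point in odd characteristic) or
with a homothetic copy (at most two points, as the roots of a quadratic).
-/

open Finset

section ParabolaAlgebra

variable {F : Type*} [Field F]

theorem coeff_eq_zero_of_parabola_affine_relation {m₁ m₂ m₃ s t r : F} (h₁₂ : m₁ ≠ m₂)
    (h₁₃ : m₁ ≠ m₃) (hsum : s + t + r = 0)
    (h : s • ((m₁, m₁ ^ 2) : F × F) + t • (m₂, m₂ ^ 2) + r • (m₃, m₃ ^ 2) = 0) : s = 0 := by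
  have h₁ := congrArg Prod.fst h
  have h₂ := congrArg Prod.snd h
  simp only [Prod.fst_add, Prod.snd_add, Prod.smul_fst, Prod.smul_snd, smul_eq_mul,
    Prod.fst_zero, Prod.snd_zero] at h₁ h₂
  have key : s * ((m₁ - m₃) * (m₂ - m₁)) = 0 := by
    linear_combination (m₂ + m₃) * h₁ - h₂ - m₂ * m₃ * hsum
  exact (mul_eq_zero.1 key).resolve_right
    (mul_ne_zero (sub_ne_zero.2 h₁₃) (sub_ne_zero.2 h₁₂.symm))

theorem eq_of_parabola_sub_eq (h2 : (2 : F) ≠ 0) {m n m' n' : F}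
    (h : ((m, m ^ 2) : F × F) - (n, n ^ 2) = (m', m' ^ 2) - (n', n' ^ 2))
    (hne : ((m, m ^ 2) : F × F) - (n, n ^ 2) ≠ 0) : m = m' := by
  simp only [Prod.mk_sub_mk, Prod.mk.injEq, ne_eq, Prod.mk_eq_zero] at h hne
  obtain ⟨h₁, h₂⟩ := h
  have hmn : m - n ≠ 0 := fun h0 => hne ⟨h0, by linear_combination (m + n) * h0⟩
  have hsum : (m - n) * ((m + n) - (m' + n')) = 0 := by
    linear_combination h₂ - (m' + n') * h₁
  have hsum' := (mul_eq_zero.1 hsum).resolve_left hmn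
  exact mul_left_cancel₀ h2 (by linear_combination hsum' + h₁)

theorem quadratic_of_parabola_homothety {a b m n : F} {D : F × F}
    (h : a • ((m, m ^ 2) : F × F) - b • (n, n ^ 2) = D) :
    b * (b - a) * n ^ 2 + 2 * D.1 * b * n + (D.1 ^ 2 - a * D.2) = 0 := by
  subst h
  simp only [Prod.fst_sub, Prod.snd_sub, Prod.smul_mk, smul_eq_mul]
  ring

theorem not_injective_of_quadratic_eq_zero {A B C : F} (hA : A ≠ 0) (n : Fin 3 → F)
    (h : ∀ i, A * n i ^ 2 + B * n i + C = 0) : ¬ Function.Injective n := by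
  intro hn
  have root_sum : ∀ i k, i ≠ k → A * (n i + n k) + B = 0 := fun i k hik =>
    (mul_eq_zero.1 (by linear_combination h i - h k :
      (n i - n k) * (A * (n i + n k) + B) = 0)).resolve_left
        (sub_ne_zero.2 (hn.ne hik))
  have : A * (n 1 - n 2) = 0 := by
    linear_combination root_sum 0 1 (by decide) - root_sum 0 2 (by decide)
  exact hn.ne (show (1 : Fin 3) ≠ 2 by decide)
    (sub_eq_zero.1 ((mul_eq_zero.1 this).resolve_left hA))

end ParabolaAlgebra

theorem Fin.eq_of_ne_of_ne_of_three : ∀ {p p' j j' : Fin 3}, p ≠ p' → j ≠ p → j ≠ p' → j' ≠ p →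
    j' ≠ p' → j = j' := by
  decide

namespace LineHypergraph

variable {F P : Type*} [Field F] [DecidableEq P] (φ : F × F ≃ P) (α : Fin 3 → F)

def edge (a : F × F) (m : F) : Finset (Fin 3 × P) :=
  univ.image fun i => (i, φ (a + α i • (m, m ^ 2)))

variable {φ α}

theorem mem_edge {a : F × F} {m : F} {v : Fin 3 × P} :
    v ∈ edge φ α a m ↔ φ.symm v.2 = a + α v.1 • (m, m ^ 2) := by
  simp only [edge, mem_image, mem_univ, true_and, Equiv.symm_apply_eq]
  exact ⟨by rintro ⟨i, rfl⟩; rfl, fun h => ⟨v.1, by rw [← h]⟩⟩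

theorem filter_fst_edge (a : F × F) (m : F) (i : Fin 3) :
    (edge φ α a m).filter (fun v => v.1 = i) = {(i, φ (a + α i • (m, m ^ 2)))} := by
  ext v
  rw [mem_filter, mem_edge, mem_singleton, Equiv.symm_apply_eq]
  exact ⟨fun ⟨h, hi⟩ => Prod.ext hi (by rw [h, hi]), by rintro rfl; exact ⟨rfl, rfl⟩⟩

theorem eq_of_mem_edge_of_fst_eq {a : F × F} {m : F} {u v : Fin 3 × P}
    (hu : u ∈ edge φ α a m) (hv : v ∈ edge φ α a m) (h : u.1 = v.1) : u = v := by
  rw [mem_edge] at hu hv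
  exact Prod.ext h (φ.symm.injective (by rw [hu, hv, h]))

theorem sub_eq_of_mem_edge {a : F × F} {m : F} {u v : Fin 3 × P}
    (hu : u ∈ edge φ α a m) (hv : v ∈ edge φ α a m) :
    φ.symm v.2 - φ.symm u.2 = (α v.1 - α u.1) • ((m, m ^ 2) : F × F) := by
  rw [mem_edge] at hu hv
  rw [hu, hv, sub_smul]
  abel

theorem base_eq_of_mem_edge_of_mem_edge {a a' : F × F} {m : F} {v : Fin 3 × P}
    (h : v ∈ edge φ α a m) (h' : v ∈ edge φ α a' m) : a = a' := by
  rw [mem_edge] at h h'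
  exact add_right_cancel (h.symm.trans h')

theorem edge_eq_of_mem_edge_of_mem_edge {a a' : F × F} {m m' : F} {v : Fin 3 × P}
    (h : v ∈ edge φ α a m) (h' : v ∈ edge φ α a' m') (hm : m = m') :
    edge φ α a m = edge φ α a' m' := by
  subst hm
  rw [base_eq_of_mem_edge_of_mem_edge h h']

theorem slope_eq_of_mem_edge_of_mem_edge (hα : Function.Injective α) {a a' : F × F}
    {m m' : F} {u v : Fin 3 × P} (huv : u ≠ v) (hu : u ∈ edge φ α a m) (hv : v ∈ edge φ α a m)
    (hu' : u ∈ edge φ α a' m') (hv' : v ∈ edge φ α a' m') : m = m' := by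
  have hβ : α v.1 - α u.1 ≠ 0 :=
    sub_ne_zero.2 (hα.ne fun h => huv (eq_of_mem_edge_of_fst_eq hu hv h.symm))
  have hw := smul_right_injective (F × F) hβ
    ((sub_eq_of_mem_edge hu hv).symm.trans (sub_eq_of_mem_edge hu' hv'))
  exact congrArg Prod.fst hw

theorem edge_injective (hα : Function.Injective α) {a a' : F × F} {m m' : F}
    (h : edge φ α a m = edge φ α a' m') : a = a' ∧ m = m' := by
  have mem : ∀ i, ((i, φ (a + α i • (m, m ^ 2))) : Fin 3 × P) ∈ edge φ α a m := fun i =>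
    mem_edge.2 (φ.symm_apply_apply _)
  have hm : m = m' := slope_eq_of_mem_edge_of_mem_edge hα
    (fun h01 => absurd (congrArg Prod.fst h01) (by decide : (0 : Fin 3) ≠ 1))
    (mem 0) (mem 1) (h ▸ mem 0) (h ▸ mem 1)
  subst hm
  exact ⟨base_eq_of_mem_edge_of_mem_edge (mem 0) (h ▸ mem 0), rfl⟩

variable (φ α) in
def hypergraph [Fintype F] [DecidableEq F] : Finset (Finset (Fin 3 × P)) :=
  (univ ×ˢ {0}ᶜ).image fun p : (F × F) × F => edge φ α p.1 p.2

section Hypergraph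

variable [Fintype F] [DecidableEq F]

theorem mem_hypergraph {e : Finset (Fin 3 × P)} :
    e ∈ hypergraph φ α ↔ ∃ a m, m ≠ 0 ∧ edge φ α a m = e := by
  simp [hypergraph]

theorem card_hypergraph (hα : Function.Injective α) :
    (hypergraph φ α).card = Fintype.card F ^ 2 * (Fintype.card F - 1) := by
  rw [hypergraph, card_image_of_injective _ fun p p' h =>
    Prod.ext (edge_injective hα h).1 (edge_injective hα h).2]
  simp [card_compl, sq]

theorem card_inter_le_one (hα : Function.Injective α) {e f : Finset (Fin 3 × P)}
    (he : e ∈ hypergraph φ α) (hf : f ∈ hypergraph φ α) (hef : e ≠ f) : (e ∩ f).card ≤ 1 := by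
  obtain ⟨a, m, -, rfl⟩ := mem_hypergraph.1 he
  obtain ⟨a', m', -, rfl⟩ := mem_hypergraph.1 hf
  by_contra! htwo
  obtain ⟨u, hu, v, hv, huv⟩ := one_lt_card.1 htwo
  rw [mem_inter] at hu hv
  exact hef (edge_eq_of_mem_edge_of_mem_edge hu.1 hu.2
    (slope_eq_of_mem_edge_of_mem_edge hα huv hu.1 hv.1 hu.2 hv.2))

theorem not_bergeTriangle (hα : Function.Injective α) : ¬ BergeTriangle (hypergraph φ α) := by
  rintro ⟨v₁, v₂, v₃, e₁, e₂, e₃, hv₁₂, -, -, he₁₂, -, he₁₃, he₁, he₂, he₃,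
    h₁₁, h₂₁, h₂₂, h₃₂, h₃₃, h₁₃⟩
  obtain ⟨a₁, m₁, -, rfl⟩ := mem_hypergraph.1 he₁
  obtain ⟨a₂, m₂, -, rfl⟩ := mem_hypergraph.1 he₂
  obtain ⟨a₃, m₃, -, rfl⟩ := mem_hypergraph.1 he₃
  have relation : (α v₂.1 - α v₁.1) • ((m₁, m₁ ^ 2) : F × F) + (α v₃.1 - α v₂.1) • (m₂, m₂ ^ 2)
      + (α v₁.1 - α v₃.1) • (m₃, m₃ ^ 2) = 0 := by
    rw [← sub_eq_of_mem_edge h₁₁ h₂₁, ← sub_eq_of_mem_edge h₂₂ h₃₂,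
      ← sub_eq_of_mem_edge h₃₃ h₁₃]
    abel
  have hβ := coeff_eq_zero_of_parabola_affine_relation
    (fun h => he₁₂ (edge_eq_of_mem_edge_of_mem_edge h₂₁ h₂₂ h))
    (fun h => he₁₃ (edge_eq_of_mem_edge_of_mem_edge h₁₁ h₁₃ h)) (by ring) relation
  exact hv₁₂ (eq_of_mem_edge_of_fst_eq h₁₁ h₂₁ (hα (sub_eq_zero.1 hβ).symm))

theorem not_bergeK2_three (h2 : (2 : F) ≠ 0) (hα : Function.Injective α) :
    ¬ BergeK2 3 (hypergraph φ α) := by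
  rintro ⟨x, y, v, e, f, -, hxy, hxv, hyv, he, hf, he_inj, hf_inj, -, hmem⟩
  choose a m _ hae using fun i => mem_hypergraph.1 (he i)
  choose b n _ hbf using fun i => mem_hypergraph.1 (hf i)
  obtain rfl : e = fun i => edge φ α (a i) (m i) := funext fun i => (hae i).symm
  obtain rfl : f = fun i => edge φ α (b i) (n i) := funext fun i => (hbf i).symm
  have hx i : x ∈ edge φ α (a i) (m i) := (hmem i).1
  have hve i : v i ∈ edge φ α (a i) (m i) := (hmem i).2.1
  have hy i : y ∈ edge φ α (b i) (n i) := (hmem i).2.2.1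
  have hvf i : v i ∈ edge φ α (b i) (n i) := (hmem i).2.2.2
  have hvx i : (v i).1 ≠ x.1 := fun h => hxv i (eq_of_mem_edge_of_fst_eq (hve i) (hx i) h).symm
  have hvy i : (v i).1 ≠ y.1 := fun h => hyv i (eq_of_mem_edge_of_fst_eq (hvf i) (hy i) h).symm
  have m_inj : Function.Injective m := fun i k h =>
    he_inj (edge_eq_of_mem_edge_of_mem_edge (hx i) (hx k) h)
  have n_inj : Function.Injective n := fun i k h =>
    hf_inj (edge_eq_of_mem_edge_of_mem_edge (hy i) (hy k) h)
  have hD i : φ.symm y.2 - φ.symm x.2 = (α (v i).1 - α x.1) • ((m i, m i ^ 2) : F × F)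
      - (α (v i).1 - α y.1) • (n i, n i ^ 2) := by
    rw [← sub_eq_of_mem_edge (hx i) (hve i), ← sub_eq_of_mem_edge (hy i) (hvf i)]
    abel
  by_cases hpart : x.1 = y.1
  · have hD0 : φ.symm y.2 - φ.symm x.2 ≠ 0 := fun h0 =>
      hxy (Prod.ext hpart (φ.symm.injective (sub_eq_zero.1 h0).symm))
    obtain ⟨i, k, hik, hvik⟩ := Fintype.exists_ne_map_eq_of_card_lt
      (fun i => (⟨(v i).1, hvx i⟩ : {j // j ≠ x.1})) (by simp)
    have translate l (hl : (v l).1 = (v i).1) : φ.symm y.2 - φ.symm x.2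
        = (α (v i).1 - α x.1) • (((m l, m l ^ 2) : F × F) - (n l, n l ^ 2)) := by
      rw [hD l, hl, ← hpart, smul_sub]
    have hc : α (v i).1 - α x.1 ≠ 0 := sub_ne_zero.2 (hα.ne (hvx i))
    have hw := smul_right_injective (F × F) hc
      ((translate i rfl).symm.trans (translate k (congrArg Subtype.val hvik).symm))
    exact hik (m_inj (eq_of_parabola_sub_eq h2 hw
      fun h0 => hD0 (by rw [translate i rfl, h0, smul_zero])))
  · have hj i : (v i).1 = (v 0).1 := Fin.eq_of_ne_of_ne_of_three hpart (hvx i) (hvy i) (hvx 0) (hvy 0)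
    have hb : α (v 0).1 - α y.1 ≠ 0 := sub_ne_zero.2 (hα.ne (hvy 0))
    have hab : α (v 0).1 - α y.1 - (α (v 0).1 - α x.1) ≠ 0 := by
      rw [sub_sub_sub_cancel_left]
      exact sub_ne_zero.2 (hα.ne hpart)
    have hquad i := quadratic_of_parabola_homothety (hD i).symm
    simp only [hj] at hquad
    exact not_injective_of_quadratic_eq_zero (mul_ne_zero hb hab) n hquad n_inj

end Hypergraph

end LineHypergraph

open LineHypergraph in
theorem exists_linear_hypergraph_of_field {F : Type*} [Field F] [Fintype F] [DecidableEq F]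
    {q : ℕ} (hq : Fintype.card F = q) (h2 : (2 : F) ≠ 0) :
    ∃ H : Finset (Finset (Fin 3 × Fin (q ^ 2))),
      (∀ e ∈ H, ∀ i : Fin 3, (e.filter (fun v => v.1 = i)).card = 1) ∧
      (∀ e ∈ H, ∀ f ∈ H, e ≠ f → (e ∩ f).card ≤ 1) ∧
      ¬ BergeTriangle H ∧
      ¬ BergeK2 3 H ∧
      H.card = q ^ 2 * (q - 1) := by
  let φ : F × F ≃ Fin (q ^ 2) := Fintype.equivFinOfCardEq (by rw [Fintype.card_prod, hq, sq])
  let α : Fin 3 → F := ![0, 1, 2]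
  have h21 : (2 : F) ≠ 1 := fun h => one_ne_zero (α := F) (by linear_combination h)
  have hα : Function.Injective α := by
    intro i j h
    fin_cases i <;> fin_cases j <;> simp_all [α, eq_comm]
  refine ⟨hypergraph φ α, fun e he i => ?_, fun e he f hf => card_inter_le_one hα he hf,
    not_bergeTriangle hα, not_bergeK2_three h2 hα, by rw [card_hypergraph hα, hq]⟩
  obtain ⟨a, m, -, rfl⟩ := mem_hypergraph.1 he
  rw [filter_fst_edge, card_singleton]

theorem stmt_14_general (q : ℕ)
    (hq : ∃ p k : ℕ, p.Prime ∧ Odd p ∧ 0 < k ∧ q = p ^ k) :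
    ∃ H : Finset (Finset (Fin 3 × Fin (q ^ 2))),
      (∀ e ∈ H, ∀ i : Fin 3, (e.filter (fun v => v.1 = i)).card = 1) ∧
      (∀ e ∈ H, ∀ f ∈ H, e ≠ f → (e ∩ f).card ≤ 1) ∧
      ¬ BergeTriangle H ∧
      ¬ BergeK2 3 H ∧
      H.card = q ^ 2 * (q - 1) := by
  obtain ⟨p, k, hp, hodd, hk, rfl⟩ := hq
  have : Fact p.Prime := ⟨hp⟩
  let F := GaloisField p k
  let : Fintype F := Fintype.ofFinite F
  classical
  have hcard : Fintype.card F = p ^ k := by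
    rw [← Nat.card_eq_fintype_card, GaloisField.card p k hk.ne']
  have hp2 : p ≠ 2 := by
    rintro rfl
    exact Nat.not_odd_iff_even.2 even_two hodd
  exact exists_linear_hypergraph_of_field hcard (Ring.two_ne_zero (by rwa [ringChar.eq F p]))

/-- For every power `q ≥ 3` of an odd prime there is a 3-uniform 3-partite linear
hypergraph with `q²` vertices in each part and `q²(q-1)` edges containing no
Berge triangle and no Berge-K_{2,3}. -/
theorem stmt_14 (q : ℕ) (hq3 : 3 ≤ q)
    (hq : ∃ p k : ℕ, p.Prime ∧ Odd p ∧ 0 < k ∧ q = p ^ k) :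
    ∃ H : Finset (Finset (Fin 3 × Fin (q ^ 2))),
      (∀ e ∈ H, ∀ i : Fin 3, (e.filter (fun v => v.1 = i)).card = 1) ∧
      (∀ e ∈ H, ∀ f ∈ H, e ≠ f → (e ∩ f).card ≤ 1) ∧
      ¬ BergeTriangle H ∧
      ¬ BergeK2 3 H ∧
      H.card = q ^ 2 * (q - 1) :=
  stmt_14_general q hq
end

section
/- Let r ≥ 3 and let l satisfy 2l + 1 ≥ r. If q ≥ 2lr³ is a power of an odd prime, then there exist r distinct elements α₁, …, α_r ∈ F_q and l distinct nonzero elements m₁, …, m_l ∈ F_q such that m_s(α_k - α_i) ≠ m_t(α_k - α_j) for all 1 ≤ s, t ≤ l and all distinct i, j, k ∈ {1, …, r}. -/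
/-!
Fix any `r` distinct elements `α`. The multipliers are chosen greedily: a new multiplier `x` has
to avoid `0`, the earlier multipliers, and the at most `n r³` values
`m_z (α_k - α_i) / (α_k - α_j)` determined by the earlier ones, which is possible as long as
`n (r³ + 1) < q`.
-/

open Finset Function

section

variable {F : Type*} [Field F] {r n : ℕ}

def IsSeparatingFamily (α : Fin r → F) (m : Fin n → F) : Prop :=
  Injective m ∧ (∀ s, m s ≠ 0) ∧
    ∀ (s t : Fin n) (i j k : Fin r), i ≠ j → j ≠ k → i ≠ k →
      m s * (α k - α i) ≠ m t * (α k - α j)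

def forbiddenMultipliers [DecidableEq F] (α : Fin r → F) (m : Fin n → F) : Finset F :=
  insert 0 (univ.image m ∪
    univ.image fun p : Fin n × Fin r × Fin r × Fin r =>
      m p.1 * (α p.2.2.2 - α p.2.1) / (α p.2.2.2 - α p.2.2.1))

lemma card_forbiddenMultipliers_le [DecidableEq F] (α : Fin r → F) (m : Fin n → F) :
    #(forbiddenMultipliers α m) ≤ n * (r ^ 3 + 1) + 1 := by
  calc #(forbiddenMultipliers α m)
      ≤ #(univ.image m) + #(univ.image fun p : Fin n × Fin r × Fin r × Fin r =>
          m p.1 * (α p.2.2.2 - α p.2.1) / (α p.2.2.2 - α p.2.2.1)) + 1 :=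
        (card_insert_le _ _).trans (Nat.add_le_add_right (card_union_le _ _) 1)
    _ ≤ n + n * (r * (r * r)) + 1 := by gcongr <;> exact card_image_le.trans (by simp)
    _ = n * (r ^ 3 + 1) + 1 := by ring

lemma IsSeparatingFamily.snoc [DecidableEq F] {α : Fin r → F} {m : Fin n → F}
    (hα : Injective α) (hm : IsSeparatingFamily α m) {x : F}
    (hx : x ∉ forbiddenMultipliers α m) :
    IsSeparatingFamily α (Fin.snoc m x : Fin (n + 1) → F) := by
  obtain ⟨hm_inj, hm_ne, hm_sep⟩ := hm
  simp only [forbiddenMultipliers, mem_insert, mem_union, mem_image, mem_univ, true_and,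
    Prod.exists, not_or, not_exists] at hx
  obtain ⟨hx0, hxm, hxratio⟩ := hx
  have hsub {i j : Fin r} (hij : i ≠ j) : α j - α i ≠ 0 := sub_ne_zero.mpr (hα.ne hij).symm
  refine ⟨Fin.snoc_injective_of_injective hm_inj fun ⟨z, hz⟩ => hxm z hz, ?_, ?_⟩
  · simpa [Fin.forall_fin_succ'] using ⟨hm_ne, hx0⟩
  · intro s t i j k hij hjk hik
    induction s using Fin.lastCases with
    | cast s =>
      induction t using Fin.lastCases with
      | cast t => simpa using hm_sep s t i j k hij hjk hik
      | last =>
        simp only [Fin.snoc_castSucc, Fin.snoc_last]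
        intro h
        exact hxratio s i j k (by rw [div_eq_iff (hsub hjk)]; exact h)
    | last =>
      induction t using Fin.lastCases with
      | cast t =>
        simp only [Fin.snoc_castSucc, Fin.snoc_last]
        intro h
        exact hxratio t j i k (by rw [div_eq_iff (hsub hik)]; exact h.symm)
      | last =>
        simp only [Fin.snoc_last]
        intro h
        exact hij (hα (by linear_combination -(mul_left_cancel₀ hx0 h)))

lemma exists_isSeparatingFamily [Fintype F] {α : Fin r → F} (hα : Injective α)
    (hcard : n * (r ^ 3 + 1) < Fintype.card F) : ∃ m : Fin n → F, IsSeparatingFamily α m := by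
  classical
  induction n with
  | zero => exact ⟨Fin.elim0, fun s => s.elim0, fun s => s.elim0, fun s => s.elim0⟩
  | succ n ih =>
    obtain ⟨m, hm⟩ := ih (lt_of_le_of_lt (Nat.mul_le_mul_right _ n.le_succ) hcard)
    have hlt : #(forbiddenMultipliers α m) < #(univ : Finset F) := by
      calc #(forbiddenMultipliers α m) ≤ n * (r ^ 3 + 1) + 1 := card_forbiddenMultipliers_le α m
        _ ≤ (n + 1) * (r ^ 3 + 1) := by rw [add_one_mul]; gcongr; omega
        _ < #univ := by rwa [card_univ]
    obtain ⟨x, -, hx⟩ := exists_mem_notMem_of_card_lt_card hlt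
    exact ⟨Fin.snoc m x, hm.snoc hα hx⟩

end

theorem stmt_15_general (r l q : ℕ) (hr : 3 ≤ r) (hl : r ≤ 2 * l + 1)
    (hql : 2 * l * r ^ 3 ≤ q)
    (F : Type*) [Field F] [Fintype F] (hcard : Fintype.card F = q) :
    ∃ (α : Fin r → F) (m : Fin l → F),
      Function.Injective α ∧ Function.Injective m ∧ (∀ s, m s ≠ 0) ∧
      ∀ (s t : Fin l) (i j k : Fin r), i ≠ j → j ≠ k → i ≠ k →
        m s * (α k - α i) ≠ m t * (α k - α j) := by
  have hl1 : 1 ≤ l := by omega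
  have hr3 : 27 ≤ r ^ 3 := by simpa using Nat.pow_le_pow_left hr 3
  obtain ⟨α⟩ : Nonempty (Fin r ↪ F) := by
    rw [Function.Embedding.nonempty_iff_card_le, Fintype.card_fin, hcard]
    nlinarith
  obtain ⟨m, hm⟩ := exists_isSeparatingFamily α.injective (n := l) (by rw [hcard]; nlinarith)
  exact ⟨α, m, α.injective, hm⟩

theorem stmt_15 (r l q : ℕ) (hr : 3 ≤ r) (hl : r ≤ 2 * l + 1)
    (hq : ∃ p k : ℕ, p.Prime ∧ Odd p ∧ 0 < k ∧ q = p ^ k)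
    (hql : 2 * l * r ^ 3 ≤ q)
    (F : Type*) [Field F] [Fintype F] (hcard : Fintype.card F = q) :
    ∃ (α : Fin r → F) (m : Fin l → F),
      Function.Injective α ∧ Function.Injective m ∧ (∀ s, m s ≠ 0) ∧
      ∀ (s t : Fin l) (i j k : Fin r), i ≠ j → j ≠ k → i ≠ k →
        m s * (α k - α i) ≠ m t * (α k - α j) :=
  stmt_15_general r l q hr hl hql F hcard
end

section
/- Let F_q be a finite field of odd order, α₁, …, α_r distinct elements of F_q, m₁, …, m_l distinct nonzero elements of F_q satisfying m_s(α_k - α_i) ≠ m_t(α_k - α_j) for all s, t and all distinct i, j, k. Fix distinct indices i, j, k. Define a tripartite graph on three copies of F_q × F_q where a vertex (u,v) in copy p is adjacent to (u',v') in copy p' (p ≠ p') iff there exist s and nonzero a with u' = u + m_s(α_{p'} - α_p)a, v' = v + m_s(α_{p'} - α_p)a². Then there is no K_{2, 2l²+1} with one of the two degree-(2l²+1) vertices in copy i, the other in copy j, and 2l² + 1 common neighbors in copy k. -/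
/-!
The neighbours of `u` in copy `k` along the slope `b = mₛ(α_k - α_i)` lie on the parabola
`y = u₂ + (x - u₁)² / b`, and those of `v` along `c = mₜ(α_k - α_j)` on `y = v₂ + (x - v₁)² / c`.
Since `b ≠ c`, the two parabolas meet in at most two points, so at most `2 l²` common
neighbours arise from the `l²` pairs `(s, t)`.
-/

namespace Timmons

variable {F : Type*} [Field F]

def parabola (u : F × F) (b : F) : Set (F × F) :=
  {w | ∃ a, w.1 = u.1 + b * a ∧ w.2 = u.2 + b * a ^ 2}

lemma eq_of_mem_parabola_of_fst_eq {u w w' : F × F} {b : F} (hb : b ≠ 0)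
    (hw : w ∈ parabola u b) (hw' : w' ∈ parabola u b) (h : w.1 = w'.1) : w = w' := by
  obtain ⟨a, h1, h2⟩ := hw
  obtain ⟨a', h1', h2'⟩ := hw'
  have ha : a = a' := mul_left_cancel₀ hb (by linear_combination h1' - h1 + h)
  exact Prod.ext h (by rw [h2, h2', ha])

lemma quadratic_of_mem_parabola_inter {u v w : F × F} {b c : F}
    (hw : w ∈ parabola u b ∩ parabola v c) :
    (c - b) * w.1 ^ 2 + 2 * (b * v.1 - c * u.1) * w.1
      + (c * u.1 ^ 2 - b * v.1 ^ 2 - b * c * (v.2 - u.2)) = 0 := by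
  obtain ⟨⟨a, h1, h2⟩, ⟨a', h3, h4⟩⟩ := hw
  linear_combination (c * (w.1 - u.1) + c * b * a) * h1 - c * b * h2 -
    (b * (w.1 - v.1) + b * c * a') * h3 + b * c * h4

lemma eq_of_quadratic_eq_zero {A B C x y z : F} (hA : A ≠ 0)
    (hx : A * x ^ 2 + B * x + C = 0) (hy : A * y ^ 2 + B * y + C = 0)
    (hz : A * z ^ 2 + B * z + C = 0) (hxy : x ≠ y) (hxz : x ≠ z) : y = z := by
  have hxy' : A * (x + y) + B = 0 :=
    (mul_eq_zero.mp (by linear_combination hx - hy : (x - y) * (A * (x + y) + B) = 0)).resolve_left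
      (sub_ne_zero.mpr hxy)
  have hxz' : A * (x + z) + B = 0 :=
    (mul_eq_zero.mp (by linear_combination hx - hz : (x - z) * (A * (x + z) + B) = 0)).resolve_left
      (sub_ne_zero.mpr hxz)
  exact sub_eq_zero.mp ((mul_eq_zero.mp (by linear_combination hxy' - hxz' :
    A * (y - z) = 0)).resolve_left hA)

lemma card_le_two_of_subset_parabola_inter {u v : F × F} {b c : F} (hb : b ≠ 0) (hbc : b ≠ c)
    {S : Finset (F × F)} (hS : ↑S ⊆ parabola u b ∩ parabola v c) : S.card ≤ 2 := by
  by_contra! h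
  obtain ⟨w₁, hw₁, w₂, hw₂, w₃, hw₃, h₁₂, h₁₃, h₂₃⟩ := Finset.two_lt_card.mp h
  have hfst : ∀ {w w'}, w ∈ S → w' ∈ S → w ≠ w' → w.1 ≠ w'.1 := fun hw hw' hne heq =>
    hne (eq_of_mem_parabola_of_fst_eq hb (hS hw).1 (hS hw').1 heq)
  exact hfst hw₂ hw₃ h₂₃ <| eq_of_quadratic_eq_zero (sub_ne_zero.mpr hbc.symm)
    (quadratic_of_mem_parabola_inter (hS hw₁)) (quadratic_of_mem_parabola_inter (hS hw₂))
    (quadratic_of_mem_parabola_inter (hS hw₃)) (hfst hw₁ hw₂ h₁₂) (hfst hw₁ hw₃ h₁₃)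

end Timmons

theorem stmt_17_general {F : Type*} [Field F]
    {r l : ℕ}
    (α : Fin r → F) (m : Fin l → F)
    (hα : Function.Injective α) (hm0 : ∀ s, m s ≠ 0)
    (hcond : ∀ (s t : Fin l) (i j k : Fin r), i ≠ j → j ≠ k → i ≠ k →
      m s * (α k - α i) ≠ m t * (α k - α j))
    (i j k : Fin r) (hij : i ≠ j) (hjk : j ≠ k) (hik : i ≠ k) :
    ¬ ∃ (u v : F × F) (W : Finset (F × F)), W.card = 2 * l ^ 2 + 1 ∧
      ∀ w ∈ W,
        (∃ (s : Fin l) (a : F), a ≠ 0 ∧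
          w.1 = u.1 + m s * (α k - α i) * a ∧ w.2 = u.2 + m s * (α k - α i) * a ^ 2) ∧
        (∃ (s : Fin l) (a : F), a ≠ 0 ∧
          w.1 = v.1 + m s * (α k - α j) * a ∧ w.2 = v.2 + m s * (α k - α j) * a ^ 2) := by
  rintro ⟨u, v, W, hcard, hW⟩
  classical
  let piece (p : Fin l × Fin l) : Finset (F × F) :=
    W.filter (· ∈ Timmons.parabola u (m p.1 * (α k - α i)) ∩
      Timmons.parabola v (m p.2 * (α k - α j)))
  have hcover : W ⊆ Finset.univ.biUnion piece := by
    intro w hw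
    obtain ⟨⟨s, a, -, h1, h2⟩, ⟨t, a', -, h3, h4⟩⟩ := hW w hw
    exact Finset.mem_biUnion.mpr ⟨(s, t), Finset.mem_univ _, Finset.mem_filter.mpr
      ⟨hw, ⟨a, by rw [h1, mul_assoc], by rw [h2, mul_assoc]⟩,
        ⟨a', by rw [h3, mul_assoc], by rw [h4, mul_assoc]⟩⟩⟩
  have hpiece (p : Fin l × Fin l) : (piece p).card ≤ 2 :=
    Timmons.card_le_two_of_subset_parabola_inter
      (mul_ne_zero (hm0 _) (sub_ne_zero.mpr fun h => hik (hα h).symm))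
      (fun h => hcond p.1 p.2 i j k hij hjk hik h)
      (fun w hw => (Finset.mem_filter.mp hw).2)
  have : W.card ≤ 2 * l ^ 2 := calc
    W.card ≤ ∑ p, (piece p).card := (Finset.card_le_card hcover).trans Finset.card_biUnion_le
    _ ≤ ∑ _p : Fin l × Fin l, 2 := Finset.sum_le_sum fun p _ => hpiece p
    _ = 2 * l ^ 2 := by simp [sq, mul_comm]
  omega

/-- In the tripartite link graph `H(Vᵢ, Vⱼ, V_k)` there is no `K_{2, 2l²+1}` with
one center in copy `i`, the other in copy `j`, and `2l² + 1` common neighbors in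
copy `k`. -/
theorem stmt_17 {F : Type*} [Field F] [Fintype F] [DecidableEq F]
    (hodd : Odd (Fintype.card F)) {r l : ℕ}
    (α : Fin r → F) (m : Fin l → F)
    (hα : Function.Injective α) (hm : Function.Injective m) (hm0 : ∀ s, m s ≠ 0)
    (hcond : ∀ (s t : Fin l) (i j k : Fin r), i ≠ j → j ≠ k → i ≠ k →
      m s * (α k - α i) ≠ m t * (α k - α j))
    (i j k : Fin r) (hij : i ≠ j) (hjk : j ≠ k) (hik : i ≠ k) :
    ¬ ∃ (u v : F × F) (W : Finset (F × F)), W.card = 2 * l ^ 2 + 1 ∧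
      ∀ w ∈ W,
        (∃ (s : Fin l) (a : F), a ≠ 0 ∧
          w.1 = u.1 + m s * (α k - α i) * a ∧ w.2 = u.2 + m s * (α k - α i) * a ^ 2) ∧
        (∃ (s : Fin l) (a : F), a ≠ 0 ∧
          w.1 = v.1 + m s * (α k - α j) * a ∧ w.2 = v.2 + m s * (α k - α j) * a ^ 2) :=
  stmt_17_general α m hα hm0 hcond i j k hij hjk hik
end

section
/- For every power q of an odd prime with q ≥ r and every r ≥ 3, setting n = rq², the maximum number of edges in an n-vertex r-uniform hypergraph that is linear, Berge-C₃-free, and Berge-K_{2,2r-3}-free is at least q²(q - 1) ≥ n^{3/2}/r^{3/2} - n/r. -/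
/-!
Take a field `F` of odd order `q ≥ r`, distinct `α₁, …, α_r ∈ F`, vertex set `[r] × F × F`, and
for each `(d, w₁, w₂) ∈ F³` the edge `{(i, w₁ - αᵢ d, w₂ - αᵢ d²)}`. Two vertices of an edge lie in
different layers and pin down the slope `d`, and through a given vertex each slope gives one edge;
hence the hypergraph is linear with `q³` edges. Around a Berge triangle the differences of
coordinates add up to zero, which forces a product of nonzero differences to vanish. In a
Berge-`K_{2,t}` with centres `x, y`, the slopes of the edges through `x` whose other vertex lies in a
fixed layer are roots of a nonzero polynomial of degree at most 2, and at most 1 when `x, y` share a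
layer; counting over the layers avoiding `x, y` gives `t ≤ max (r - 1) (2 (r - 2)) < 2r - 3`.
-/

open Finset Polynomial

theorem Polynomial.card_le_natDegree_of_isRoot {R ι : Type*} [CommRing R] [IsDomain R]
    [DecidableEq R] {p : R[X]} (hp : p ≠ 0) {s : Finset ι} {g : ι → R} (hg : Set.InjOn g s)
    (hs : ∀ i ∈ s, p.IsRoot (g i)) : #s ≤ p.natDegree := by
  rw [← card_image_of_injOn hg]
  refine card_le_degree_of_subset_roots fun z hz => ?_
  obtain ⟨i, hi, rfl⟩ := mem_image.mp hz
  exact (mem_roots hp).mpr (hs i hi)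

theorem Polynomial.C_mul_X_sq_add_C_mul_X_add_C_eq_zero_iff {R : Type*} [Semiring R] {a b c : R} :
    C a * X ^ 2 + C b * X + C c = 0 ↔ a = 0 ∧ b = 0 ∧ c = 0 := by
  refine ⟨fun h => ⟨?_, ?_, ?_⟩, by rintro ⟨rfl, rfl, rfl⟩; simp⟩
  · simpa using congrArg (coeff · 2) h
  · simpa using congrArg (coeff · 1) h
  · simpa using congrArg (coeff · 0) h

section Equiv

variable {V W : Type*} [DecidableEq W] (σ : V ≃ W)

theorem Equiv.symm_apply_mem_of_mem_image {s : Finset V} {w : W} (h : w ∈ s.image σ) :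
    σ.symm w ∈ s := by
  obtain ⟨a, ha, rfl⟩ := mem_image.mp h
  simpa using ha

variable {H : Finset (Finset V)}

theorem BergeTriangle.of_image_equiv (h : BergeTriangle (H.image (image σ))) :
    BergeTriangle H := by
  obtain ⟨v₁, v₂, v₃, e₁, e₂, e₃, h₁₂, h₂₃, h₁₃, he₁₂, he₂₃, he₁₃, he₁, he₂, he₃,
    h₁₁, h₂₁, h₂₂, h₃₂, h₃₃, h₁₃'⟩ := h
  obtain ⟨s₁, hs₁, rfl⟩ := mem_image.mp he₁
  obtain ⟨s₂, hs₂, rfl⟩ := mem_image.mp he₂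
  obtain ⟨s₃, hs₃, rfl⟩ := mem_image.mp he₃
  exact ⟨σ.symm v₁, σ.symm v₂, σ.symm v₃, s₁, s₂, s₃, σ.symm.injective.ne h₁₂,
    σ.symm.injective.ne h₂₃, σ.symm.injective.ne h₁₃, ne_of_apply_ne _ he₁₂,
    ne_of_apply_ne _ he₂₃, ne_of_apply_ne _ he₁₃, hs₁, hs₂, hs₃,
    σ.symm_apply_mem_of_mem_image h₁₁, σ.symm_apply_mem_of_mem_image h₂₁,
    σ.symm_apply_mem_of_mem_image h₂₂, σ.symm_apply_mem_of_mem_image h₃₂,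
    σ.symm_apply_mem_of_mem_image h₃₃, σ.symm_apply_mem_of_mem_image h₁₃'⟩

theorem BergeK2.of_image_equiv {t : ℕ} (h : BergeK2 t (H.image (image σ))) : BergeK2 t H := by
  obtain ⟨x, y, v, e, f, hv, hxy, hxv, hyv, he, hf, he_inj, hf_inj, hef, hmem⟩ := h
  simp only [mem_image] at he hf
  choose s hs hse using he
  choose s' hs' hsf using hf
  obtain rfl : e = fun i => (s i).image σ := funext fun i => (hse i).symm
  obtain rfl : f = fun i => (s' i).image σ := funext fun i => (hsf i).symm
  refine ⟨σ.symm x, σ.symm y, σ.symm ∘ v, s, s', σ.symm.injective.comp hv,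
    σ.symm.injective.ne hxy, fun i => σ.symm.injective.ne (hxv i),
    fun i => σ.symm.injective.ne (hyv i), hs, hs', fun i j h => he_inj (by simp only [h]),
    fun i j h => hf_inj (by simp only [h]), fun i j h => hef i j (by simp only [h]),
    fun i => ?_⟩
  obtain ⟨hxe, hve, hyf, hvf⟩ := hmem i
  exact ⟨σ.symm_apply_mem_of_mem_image hxe, σ.symm_apply_mem_of_mem_image hve,
    σ.symm_apply_mem_of_mem_image hyf, σ.symm_apply_mem_of_mem_image hvf⟩

end Equiv

section Construction

variable {F ι : Type*} [Field F] [DecidableEq F] [Fintype ι] [DecidableEq ι]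

def algEdge (α : ι ↪ F) (P : F × F × F) : Finset (ι × F × F) :=
  univ.image fun i => (i, P.2.1 - α i * P.1, P.2.2 - α i * P.1 ^ 2)

def algHypergraph [Fintype F] (α : ι ↪ F) : Finset (Finset (ι × F × F)) :=
  univ.image (algEdge α)

variable {α : ι ↪ F} {u v w : ι × F × F} {P Q : F × F × F}

theorem mem_algEdge :
    w ∈ algEdge α P ↔ w.2.1 = P.2.1 - α w.1 * P.1 ∧ w.2.2 = P.2.2 - α w.1 * P.1 ^ 2 := by
  obtain ⟨i, a, b⟩ := w
  simp only [algEdge, mem_image, mem_univ, true_and, Prod.mk.injEq]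
  constructor
  · rintro ⟨j, rfl, ha, hb⟩
    exact ⟨ha.symm, hb.symm⟩
  · rintro ⟨ha, hb⟩
    exact ⟨i, rfl, ha.symm, hb.symm⟩

theorem mk_mem_algEdge (α : ι ↪ F) (P : F × F × F) (i : ι) :
    (i, P.2.1 - α i * P.1, P.2.2 - α i * P.1 ^ 2) ∈ algEdge α P :=
  mem_algEdge.mpr ⟨rfl, rfl⟩

theorem card_algEdge (α : ι ↪ F) (P : F × F × F) : #(algEdge α P) = Fintype.card ι := by
  rw [algEdge, card_image_of_injective _ fun i j h => (Prod.ext_iff.mp h).1, card_univ]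

theorem sub_eq_of_mem_algEdge (hu : u ∈ algEdge α P) (hv : v ∈ algEdge α P) :
    v.2.1 - u.2.1 = (α u.1 - α v.1) * P.1 ∧ v.2.2 - u.2.2 = (α u.1 - α v.1) * P.1 ^ 2 := by
  rw [mem_algEdge] at hu hv
  constructor
  · linear_combination hv.1 - hu.1
  · linear_combination hv.2 - hu.2

theorem injOn_fst_algEdge (α : ι ↪ F) (P : F × F × F) :
    Set.InjOn Prod.fst (algEdge α P : Set (ι × F × F)) := by
  intro u hu v hv h
  obtain ⟨h₁, h₂⟩ := sub_eq_of_mem_algEdge hu hv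
  rw [h, sub_self, zero_mul, sub_eq_zero] at h₁ h₂
  exact Prod.ext h (Prod.ext h₁.symm h₂.symm)

theorem injOn_fst_setOf_mem_algEdge (α : ι ↪ F) (w : ι × F × F) :
    Set.InjOn Prod.fst {P | w ∈ algEdge α P} := by
  intro P hP Q hQ h
  obtain ⟨hP₁, hP₂⟩ := mem_algEdge.mp hP
  obtain ⟨hQ₁, hQ₂⟩ := mem_algEdge.mp hQ
  refine Prod.ext h (Prod.ext ?_ ?_)
  · linear_combination hQ₁ - hP₁ + α w.1 * h
  · linear_combination hQ₂ - hP₂ + α w.1 * (P.1 + Q.1) * h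

theorem fst_ne_of_mem_algEdge (hPQ : algEdge α P ≠ algEdge α Q) (hP : w ∈ algEdge α P)
    (hQ : w ∈ algEdge α Q) : P.1 ≠ Q.1 :=
  fun h => hPQ (congrArg _ (injOn_fst_setOf_mem_algEdge α _ hP hQ h))

theorem eq_of_pair_mem_algEdge (huv : u ≠ v) (hu : u ∈ algEdge α P)
    (hv : v ∈ algEdge α P) (hu' : u ∈ algEdge α Q) (hv' : v ∈ algEdge α Q) : P = Q := by
  have hα : α u.1 - α v.1 ≠ 0 :=
    sub_ne_zero.mpr (α.injective.ne fun h => huv (injOn_fst_algEdge α _ hu hv h))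
  refine injOn_fst_setOf_mem_algEdge α _ hu hu' (mul_left_cancel₀ hα ?_)
  rw [← (sub_eq_of_mem_algEdge hu hv).1, ← (sub_eq_of_mem_algEdge hu' hv').1]

theorem algEdge_injective [Nontrivial ι] : Function.Injective (algEdge α) := by
  intro P Q h
  obtain ⟨i, j, hij⟩ := exists_pair_ne ι
  exact eq_of_pair_mem_algEdge (fun h => hij (Prod.ext_iff.mp h).1)
    (mk_mem_algEdge α P i) (mk_mem_algEdge α P j)
    (h ▸ mk_mem_algEdge α P i) (h ▸ mk_mem_algEdge α P j)

theorem card_algHypergraph [Fintype F] [Nontrivial ι] (α : ι ↪ F) :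
    #(algHypergraph α) = Fintype.card F ^ 3 := by
  rw [algHypergraph, card_image_of_injective _ algEdge_injective, card_univ,
    Fintype.card_prod, Fintype.card_prod]
  ring

theorem card_inter_le_one_of_mem_algHypergraph [Fintype F] {e f : Finset (ι × F × F)}
    (he : e ∈ algHypergraph α) (hf : f ∈ algHypergraph α) (hef : e ≠ f) : #(e ∩ f) ≤ 1 := by
  obtain ⟨P, -, rfl⟩ := mem_image.mp he
  obtain ⟨Q, -, rfl⟩ := mem_image.mp hf
  refine card_le_one.mpr fun u hu v hv => by_contra fun huv => hef (congrArg _ ?_)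
  rw [mem_inter] at hu hv
  exact eq_of_pair_mem_algEdge huv hu.1 hv.1 hu.2 hv.2

theorem not_bergeTriangle_algHypergraph [Fintype F] (α : ι ↪ F) :
    ¬ BergeTriangle (algHypergraph α) := by
  rintro ⟨v₁, v₂, v₃, e₁, e₂, e₃, -, h₂₃, -, h₁₂, h₂₃', -, he₁, he₂, he₃,
    h₁₁, h₂₁, h₂₂, h₃₂, h₃₃, h₁₃⟩
  obtain ⟨P₁, -, rfl⟩ := mem_image.mp he₁
  obtain ⟨P₂, -, rfl⟩ := mem_image.mp he₂
  obtain ⟨P₃, -, rfl⟩ := mem_image.mp he₃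
  have hα : α v₃.1 - α v₂.1 ≠ 0 := sub_ne_zero.mpr
    (α.injective.ne fun h => h₂₃ (injOn_fst_algEdge α _ h₂₂ h₃₂ h.symm))
  have hd₁₂ := sub_ne_zero.mpr (fst_ne_of_mem_algEdge h₁₂ h₂₁ h₂₂).symm
  have hd₂₃ := sub_ne_zero.mpr (fst_ne_of_mem_algEdge h₂₃' h₃₂ h₃₃)
  obtain ⟨c₁, c₁'⟩ := sub_eq_of_mem_algEdge h₁₁ h₂₁
  obtain ⟨c₂, c₂'⟩ := sub_eq_of_mem_algEdge h₂₂ h₃₂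
  obtain ⟨c₃, c₃'⟩ := sub_eq_of_mem_algEdge h₃₃ h₁₃
  -- the three chords close up, in both coordinates; eliminating `P₁.1 + P₃.1` leaves a product
  have key : (α v₃.1 - α v₂.1) * (P₂.1 - P₃.1) * (P₂.1 - P₁.1) = 0 := by
    linear_combination (c₁' + c₂' + c₃') - (P₁.1 + P₃.1) * (c₁ + c₂ + c₃)
  exact mul_ne_zero (mul_ne_zero hα hd₂₃) hd₁₂ key

section JoinPoly

variable {F ι : Type*} [Field F] {α : ι ↪ F}

/-- If `v` in layer `k` lies on an edge of slope `d` through `x` and on an edge of slope `d'`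
through `y`, then with `β = α k - α x.1`, `γ = α k - α y.1`, `A = y.2.1 - x.2.1` and
`B = y.2.2 - x.2.2` we have `γ d' = A + β d` and `γ d'² = B + β d²`; eliminating `d'` shows that
`d` is a root of this polynomial. -/
noncomputable def joinPoly (α : ι ↪ F) (x y : ι × F × F) (k : ι) : F[X] :=
  C ((α k - α x.1) * (α y.1 - α x.1)) * X ^ 2 + C (2 * (y.2.1 - x.2.1) * (α k - α x.1)) * X +
    C ((y.2.1 - x.2.1) ^ 2 - (α k - α y.1) * (y.2.2 - x.2.2))

theorem joinPoly_ne_zero (h2 : (2 : F) ≠ 0) {x y : ι × F × F} (hxy : x ≠ y) {k : ι}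
    (hk : k ≠ x.1) : joinPoly α x y k ≠ 0 := by
  rw [Ne, joinPoly, C_mul_X_sq_add_C_mul_X_add_C_eq_zero_iff]
  rintro ⟨h₂, h₁, h₀⟩
  have hβ : α k - α x.1 ≠ 0 := sub_ne_zero.mpr (α.injective.ne hk)
  have h₁₁ : x.1 = y.1 :=
    α.injective (sub_eq_zero.mp ((mul_eq_zero.mp h₂).resolve_left hβ)).symm
  have hA : y.2.1 - x.2.1 = 0 := by
    simpa only [mul_eq_zero, h2, hβ, false_or, or_false] using h₁
  have hB : y.2.2 - x.2.2 = 0 := by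
    rw [hA, ← h₁₁, sq, zero_mul, zero_sub, neg_eq_zero] at h₀
    exact (mul_eq_zero.mp h₀).resolve_left hβ
  exact hxy (Prod.ext h₁₁ (Prod.ext (sub_eq_zero.mp hA).symm (sub_eq_zero.mp hB).symm))

theorem natDegree_joinPoly_le (α : ι ↪ F) (x y : ι × F × F) (k : ι) :
    (joinPoly α x y k).natDegree ≤ 2 :=
  natDegree_quadratic_le

theorem natDegree_joinPoly_le_one {x y : ι × F × F} (hxy : x.1 = y.1) (k : ι) :
    (joinPoly α x y k).natDegree ≤ 1 := by
  rw [joinPoly, hxy, sub_self, mul_zero, C_0, zero_mul, zero_add]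
  exact natDegree_linear_le

variable [DecidableEq F] [Fintype ι] [DecidableEq ι]

theorem isRoot_joinPoly {x y v : ι × F × F} {P Q : F × F × F} (hx : x ∈ algEdge α P)
    (hv : v ∈ algEdge α P) (hy : y ∈ algEdge α Q) (hv' : v ∈ algEdge α Q) :
    (joinPoly α x y v.1).IsRoot P.1 := by
  obtain ⟨c₁, c₁'⟩ := sub_eq_of_mem_algEdge hx hv
  obtain ⟨c₂, c₂'⟩ := sub_eq_of_mem_algEdge hy hv'
  simp only [joinPoly, IsRoot, eval_add, eval_mul, eval_pow, eval_C, eval_X]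
  linear_combination (y.2.1 - x.2.1 + (α v.1 - α x.1) * P.1 + (α v.1 - α y.1) * Q.1) *
    (c₁ - c₂) - (α v.1 - α y.1) * (c₁' - c₂')

end JoinPoly

theorem not_bergeK2_algHypergraph {F ι : Type*} [Field F] [Fintype F] [DecidableEq F]
    [Fintype ι] [DecidableEq ι] (α : ι ↪ F) (h2 : (2 : F) ≠ 0) (hι : 3 ≤ Fintype.card ι) :
    ¬ BergeK2 (2 * Fintype.card ι - 3) (algHypergraph α) := by
  rintro ⟨x, y, v, e, f, -, hxy, hxv, hyv, he, hf, he_inj, -, -, hmem⟩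
  simp only [algHypergraph, mem_image, mem_univ, true_and] at he hf
  choose P hP using he
  choose Q hQ using hf
  obtain rfl : e = fun m => algEdge α (P m) := funext fun m => (hP m).symm
  obtain rfl : f = fun m => algEdge α (Q m) := funext fun m => (hQ m).symm
  have hslope : Function.Injective fun m => (P m).1 := fun a b h =>
    he_inj (congrArg (algEdge α) (injOn_fst_setOf_mem_algEdge α _ (hmem a).1 (hmem b).1 h))
  have hvx (m) : (v m).1 ≠ x.1 := fun h =>
    hxv m (injOn_fst_algEdge α _ (hmem m).1 (hmem m).2.1 h.symm)
  have hvy (m) : (v m).1 ≠ y.1 := fun h =>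
    hyv m (injOn_fst_algEdge α _ (hmem m).2.2.1 (hmem m).2.2.2 h.symm)
  have hfiber (k) (hk : k ∈ univ.erase x.1) :
      #{m | (v m).1 = k} ≤ (joinPoly α x y k).natDegree := by
    refine card_le_natDegree_of_isRoot (joinPoly_ne_zero h2 hxy (mem_erase.mp hk).1)
      hslope.injOn fun m hm => ?_
    rw [← (mem_filter.mp hm).2]
    exact isRoot_joinPoly (hmem m).1 (hmem m).2.1 (hmem m).2.2.1 (hmem m).2.2.2
  by_cases hxy₁ : x.1 = y.1
  · have := card_le_mul_card_image_of_maps_to (t := univ.erase x.1)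
      (fun m _ => mem_erase.mpr ⟨hvx m, mem_univ _⟩) 1
      fun k hk => (hfiber k hk).trans (natDegree_joinPoly_le_one hxy₁ k)
    rw [card_erase_of_mem (mem_univ _), card_univ, card_univ, Fintype.card_fin] at this
    omega
  · have := card_le_mul_card_image_of_maps_to (t := (univ.erase x.1).erase y.1)
      (fun m _ => mem_erase.mpr ⟨hvy m, mem_erase.mpr ⟨hvx m, mem_univ _⟩⟩) 2
      fun k hk => (hfiber k (mem_of_mem_erase hk)).trans (natDegree_joinPoly_le α x y k)
    rw [card_erase_of_mem (mem_erase.mpr ⟨Ne.symm hxy₁, mem_univ _⟩),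
      card_erase_of_mem (mem_univ _), card_univ, card_univ, Fintype.card_fin] at this
    omega

theorem exists_linear_bergeFree_of_field (F : Type*) [Field F] [Fintype F] [DecidableEq F]
    (h2 : (2 : F) ≠ 0) {r q : ℕ} (hr : 3 ≤ r) (hF : Fintype.card F = q) (hrq : r ≤ q) :
    ∃ H : Finset (Finset (Fin (r * q ^ 2))),
      (∀ e ∈ H, #e = r) ∧ (∀ e ∈ H, ∀ f ∈ H, e ≠ f → #(e ∩ f) ≤ 1) ∧
      ¬ BergeTriangle H ∧ ¬ BergeK2 (2 * r - 3) H ∧ #H = q ^ 3 := by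
  obtain ⟨α⟩ : Nonempty (Fin r ↪ F) :=
    Function.Embedding.nonempty_of_card_le (by rwa [Fintype.card_fin, hF])
  have : Nontrivial (Fin r) := Fin.nontrivial_iff_two_le.mpr (by omega)
  let σ : Fin r × F × F ≃ Fin (r * q ^ 2) :=
    Fintype.equivFinOfCardEq <| by
      rw [Fintype.card_prod, Fintype.card_prod, Fintype.card_fin, hF, sq]
  refine ⟨(algHypergraph α).image (image σ), ?_, ?_, fun h => ?_, fun h => ?_, ?_⟩
  · intro e he
    obtain ⟨s, hs, rfl⟩ := mem_image.mp he
    obtain ⟨P, -, rfl⟩ := mem_image.mp hs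
    rw [card_image_of_injective _ σ.injective, card_algEdge, Fintype.card_fin]
  · intro e he f hf hef
    obtain ⟨s, hs, rfl⟩ := mem_image.mp he
    obtain ⟨t, ht, rfl⟩ := mem_image.mp hf
    rw [← image_inter _ _ σ.injective, card_image_of_injective _ σ.injective]
    exact card_inter_le_one_of_mem_algHypergraph hs ht (ne_of_apply_ne _ hef)
  · exact not_bergeTriangle_algHypergraph α (h.of_image_equiv σ)
  · exact not_bergeK2_algHypergraph α h2 (by simpa using hr) (by simpa using h.of_image_equiv σ)
  · rw [card_image_of_injective _ (image_injective σ.injective), card_algHypergraph, hF]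

theorem rpow_three_halves_div_sub (r q : ℝ) (hr : 0 < r) (hq : 0 ≤ q) :
    (r * q ^ 2) ^ (3 / 2 : ℝ) / r ^ (3 / 2 : ℝ) - r * q ^ 2 / r = q ^ 2 * (q - 1) := by
  have hq3 : (q ^ 2) ^ (3 / 2 : ℝ) = q ^ 3 := by
    rw [← Real.rpow_natCast, ← Real.rpow_mul hq]
    norm_num
  rw [Real.mul_rpow hr.le (sq_nonneg q), hq3,
    mul_div_cancel_left₀ _ (Real.rpow_pos_of_pos hr _).ne', mul_div_cancel_left₀ _ hr.ne']
  ring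

/-- For `q ≥ r ≥ 3` with `q` a power of an odd prime and `n = rq²`, there is an
`n`-vertex `r`-uniform linear hypergraph with no Berge-C₃ and no Berge-K_{2,2r-3}
having at least `q²(q-1) ≥ n^{3/2}/r^{3/2} - n/r` edges. -/
theorem stmt_19 (r q : ℕ) (hr : 3 ≤ r) (hqr : r ≤ q)
    (hq : ∃ p k : ℕ, p.Prime ∧ Odd p ∧ 0 < k ∧ q = p ^ k) :
    (∃ H : Finset (Finset (Fin (r * q ^ 2))),
      (∀ e ∈ H, e.card = r) ∧
      (∀ e ∈ H, ∀ f ∈ H, e ≠ f → (e ∩ f).card ≤ 1) ∧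
      ¬ BergeTriangle H ∧
      ¬ BergeK2 (2 * r - 3) H ∧
      q ^ 2 * (q - 1) ≤ H.card) ∧
    ((q : ℝ) ^ 2 * ((q : ℝ) - 1) ≥
      ((r * q ^ 2 : ℕ) : ℝ) ^ ((3 : ℝ) / 2) / (r : ℝ) ^ ((3 : ℝ) / 2)
        - ((r * q ^ 2 : ℕ) : ℝ) / r) := by
  classical
  obtain ⟨p, k, hp, hodd, hk, hq⟩ := hq
  have : Fact p.Prime := ⟨hp⟩
  let : Fintype (GaloisField p k) := Fintype.ofFinite _
  have hF : Fintype.card (GaloisField p k) = q := by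
    rw [Fintype.card_eq_nat_card, GaloisField.card p k hk.ne', hq]
  have h2 : (2 : GaloisField p k) ≠ 0 := Ring.two_ne_zero <| by
    rw [ringChar.eq (GaloisField p k) p]
    rintro rfl
    exact Nat.not_odd_iff_even.mpr even_two hodd
  obtain ⟨H, hunif, hlin, htri, hK, hcard⟩ := exists_linear_bergeFree_of_field _ h2 hr hF hqr
  refine ⟨⟨H, hunif, hlin, htri, hK, ?_⟩, ?_⟩
  · rw [hcard]
    exact (Nat.mul_le_mul_left _ (Nat.sub_le q 1)).trans_eq (by ring)
  · push_cast
    rw [rpow_three_halves_div_sub _ _ (by positivity) q.cast_nonneg]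
end Construction
end
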